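/- arXiv:0810.4216 — 6 statements merged into one kernel-verified Lean document; each statement's English description precedes it below -/
import Mathlib

section
/- For every p ∈ [1, +∞] there exists a constant C > 0, depending only on κ and p, such that for every x ∈ ℝ and every bounded continuous function f ∈ L^p(μ_κ) on ℝ, the function τ_x^κ f belongs to L^p(μ_κ) and ‖τ_x^κ f‖_{κ,p} ≤ C ‖f‖_{κ,p}, with C independent of x and f. -/
noncomputable section
open MeasureTheory Set Real
open scoped ENNReal NNReal

/-- one-dimensional measure `dμ_κ(x) = |x|^{2κ} dx` -/
def muK1 (κ : ℝ) : Measure ℝ :=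
  volume.withDensity fun x => ENNReal.ofReal (|x| ^ (2 * κ))

/-- the measure `μ_κ` on `ℝ^d` with density `∏_j |x_j|^{2κ_j}` -/
def muK (d : ℕ) (κ : Fin d → ℝ) : Measure (Fin d → ℝ) :=
  volume.withDensity fun x => ENNReal.ofReal (∏ j, |x j| ^ (2 * κ j))

/-- the constant `M_κ = Γ(κ+1/2)/(Γ(κ)Γ(1/2))` -/
def Mconst (κ : ℝ) : ℝ := Real.Gamma (κ + 1/2) / (Real.Gamma κ * Real.Gamma (1/2))

/-- `σ_{x,y,z}` -/
def sigma3 (x y z : ℝ) : ℝ := if x ≠ 0 ∧ y ≠ 0 then (x^2 + y^2 - z^2) / (2*x*y) else 0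

/-- area of the (possibly degenerate) triangle with side lengths `x,y,z` (Heron) -/
def triArea (x y z : ℝ) : ℝ :=
  Real.sqrt (((x+y+z)/2) * ((x+y+z)/2 - x) * ((x+y+z)/2 - y) * ((x+y+z)/2 - z))

/-- the kernel `K_κ(x,y,z)` -/
def Kker (κ x y z : ℝ) : ℝ :=
  if |x - y| ≤ z ∧ z ≤ x + y then
    (2:ℝ) ^ (2*κ - 2) * Mconst κ * triArea x y z ^ (2*κ - 2) * (x*y*z) ^ (1 - 2*κ)
  else 0

/-- density of the measure `ν^{κ,+}_{x,y}` with respect to Lebesgue measure -/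
def nuDens (κ x y z : ℝ) : ℝ≥0∞ :=
  ENNReal.ofReal ((1/2) * Kker κ |x| |y| |z| * (1 - sigma3 x y z) * |z| ^ (2*κ))

/-- the measure `ν^{κ,+}_{x,y}` -/
def nuPlus (κ x y : ℝ) : Measure ℝ := volume.withDensity (nuDens κ x y)

/-- the product measure `υ^κ_{x,y} = ν^{κ_1,+}_{x_1,y_1} ⊗ ⋯ ⊗ ν^{κ_d,+}_{x_d,y_d}` -/
def upsilon (d : ℕ) (κ x y : Fin d → ℝ) : Measure (Fin d → ℝ) :=
  volume.withDensity fun z => ∏ j, nuDens (κ j) (x j) (y j) (z j)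

/-- the set `ℝ^d_reg` of regular points -/
def regSet (d : ℕ) : Set (Fin d → ℝ) := {x | ∀ j, x j ≠ 0}

/-- the Euclidean ball of radius `r` centered at the origin -/
def eBall (d : ℕ) (r : ℝ) : Set (Fin d → ℝ) := {x | ∑ j, (x j)^2 < r^2}

/-- the open cube `Q_r` -/
def cubeQ (d : ℕ) (r : ℝ) : Set (Fin d → ℝ) := {x | ∀ j, |x j| < r}

/-- the constant `c_κ` with `c_κ⁻¹ = ∫ e^{-‖x‖²/2} dμ_κ` -/
def cKappa (d : ℕ) (κ : Fin d → ℝ) : ℝ :=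
  (∫ x, Real.exp (-(∑ j, (x j)^2) / 2) ∂(muK d κ))⁻¹

open Classical in
/-- the `ℤ_2^d` Dunkl maximal operator (explicit form), vanishing off `ℝ^d_reg` -/
def Mdunkl (d : ℕ) (κ : Fin d → ℝ) (f : (Fin d → ℝ) → ℝ) (x : Fin d → ℝ) : ℝ≥0∞ :=
  if x ∈ regSet d then
    ⨆ (r : ℝ) (_ : 0 < r), ENNReal.ofReal
      ((cKappa d κ / (muK d κ (eBall d r)).toReal) *
        |∫ y in regSet d, f y * (upsilon d κ x (-y) (eBall d r)).toReal ∂(muK d κ)|)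
  else 0

/-- the cube Dunkl maximal operator `M_κ^Q` (explicit form) -/
def MdunklQ (d : ℕ) (κ : Fin d → ℝ) (f : (Fin d → ℝ) → ℝ) (x : Fin d → ℝ) : ℝ≥0∞ :=
  ⨆ (r : ℝ) (_ : 0 < r), ENNReal.ofReal
    ((cKappa d κ / (muK d κ (cubeQ d r)).toReal) *
      |∫ y in regSet d, f y * (upsilon d κ x (-y) (cubeQ d r)).toReal ∂(muK d κ)|)

/-- the interval `I(x,r) = [max{0,|x|-r}, |x|+r)` -/
def Iset (x r : ℝ) : Set ℝ := Set.Ico (max 0 (|x| - r)) (|x| + r)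

/-- the rectangle `R(z,r) = I(z_1,r) × ⋯ × I(z_d,r)` -/
def Rset (d : ℕ) (z : Fin d → ℝ) (r : ℝ) : Set (Fin d → ℝ) :=
  Set.univ.pi fun j => Iset (z j) r

/-- the weighted maximal operator `M_κ^R` -/
def MR (d : ℕ) (κ : Fin d → ℝ) (f : (Fin d → ℝ) → ℝ) (x : Fin d → ℝ) : ℝ≥0∞ :=
  ⨆ (r : ℝ) (_ : 0 < r),
    (muK d κ (Rset d x r))⁻¹ *
      ∫⁻ y in {y | (fun j => |y j|) ∈ Rset d x r}, ENNReal.ofReal |f y| ∂(muK d κ)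

/-- Rösler's explicit formula for the one-dimensional Dunkl translation `τ_x^κ f(y)` -/
def tauK (κ x : ℝ) (f : ℝ → ℝ) (y : ℝ) : ℝ :=
  (1/2) * (∫ t in Set.Ioo (-1:ℝ) 1,
      f (Real.sqrt (x^2 + y^2 + 2*x*y*t)) *
        (1 + (x + y) / Real.sqrt (x^2 + y^2 + 2*x*y*t)) *
        (Mconst κ * (1 + t) * (1 - t^2) ^ (κ - 1)))
  + (1/2) * (∫ t in Set.Ioo (-1:ℝ) 1,
      f (-Real.sqrt (x^2 + y^2 + 2*x*y*t)) *
        (1 - (x + y) / Real.sqrt (x^2 + y^2 + 2*x*y*t)) *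
        (Mconst κ * (1 + t) * (1 - t^2) ^ (κ - 1)))

/-- an `ℝ≥0∞`-valued `L^p` norm for `ℝ≥0∞`-valued functions -/
def lpNormE {α : Type*} [MeasurableSpace α] (g : α → ℝ≥0∞) (p : ℝ≥0∞) (μ : Measure α) : ℝ≥0∞ :=
  if p = ∞ then essSup g μ else (∫⁻ x, g x ^ p.toReal ∂μ) ^ (1 / p.toReal)

/-- the Hardy–Littlewood maximal operator over cubes centered at `x` -/
def HLmax (d : ℕ) (f : (Fin d → ℝ) → ℝ) (x : Fin d → ℝ) : ℝ≥0∞ :=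
  ⨆ (r : ℝ) (_ : 0 < r),
    (volume {y : Fin d → ℝ | ∀ j, |y j - x j| < r})⁻¹ *
      ∫⁻ y in {y : Fin d → ℝ | ∀ j, |y j - x j| < r}, ENNReal.ofReal |f y| ∂volume

/-!
Write `φ_{x,y}(t) = √(x² + y² + 2xyt)` and `ν = (1 - t²)^{κ-1} dt` on `(-1, 1)`, so that
`Φ_κ(t) dt = M_κ (1 + t) dν(t)`. The elementary bound `(1 + t)|x + y| ≤ 2 φ_{x,y}(t)` gives
`|τ_x^κ f(y)| ≤ 2 M_κ ∫ (|f| + |f(-·)|)(φ_{x,y}(t)) dν(t)`. After Jensen's inequality for the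
finite measure `ν`, the `L^p` bound reduces to the product formula
`∫∫ g(φ_{x,y}(t)) dν(t) dμ_κ(y) = ν(-1, 1) ∫ g(|z|) dμ_κ(z)`. For `x, y > 0` the substitution
`z = φ_{x,y}(t)` turns `y^{2κ} dν(t) dy` into `K(y, z) dz dy` with `K` symmetric in `y` and `z`,
so Tonelli lets `y` and `z` trade places, and the inner integral is again `ν(-1, 1) z^{2κ}`.
For `p = ∞`, continuity upgrades `|f| ≤ ‖f‖_∞` from almost everywhere to everywhere.
The constant is `C = 4 M_κ ν(-1, 1)`.
-/

namespace DunklTranslation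

section Reflection

variable {G : Type*} [MeasurableSpace G] [InvolutiveNeg G] [MeasurableNeg G] {μ : Measure G}
  [μ.IsNegInvariant]

lemma isNegInvariant_withDensity {f : G → ℝ≥0∞} (hf : ∀ x, f (-x) = f x) :
    (μ.withDensity f).IsNegInvariant := by
  constructor
  ext s hs
  rw [Measure.neg, Measure.map_apply measurable_neg hs, withDensity_apply _ (measurable_neg hs),
    withDensity_apply _ hs, ← (Measure.measurePreserving_neg μ).setLIntegral_comp_preimage_emb
    (MeasurableEquiv.neg G).measurableEmbedding f s]
  exact setLIntegral_congr_fun (measurable_neg hs) fun x _ => (hf x).symm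

lemma isNegInvariant_restrict {s : Set G} (hs : -s = s) : (μ.restrict s).IsNegInvariant := by
  constructor
  ext t ht
  rw [Measure.neg, Measure.map_apply measurable_neg ht, Measure.restrict_apply (measurable_neg ht),
    Measure.restrict_apply ht, ← Measure.measure_neg, neg_preimage, inter_neg, neg_neg, hs]

end Reflection

lemma lintegral_eq_two_mul_setLIntegral_Ioi {μ : Measure ℝ} [μ.IsNegInvariant]
    [NullSingletonClass μ] {G : ℝ → ℝ≥0∞} (hG : ∀ x, G (-x) = G x) :
    ∫⁻ x, G x ∂μ = 2 * ∫⁻ x in Ioi 0, G x ∂μ := by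
  have hIic : ∫⁻ x in Iic 0, G x ∂μ = ∫⁻ x in Ioi 0, G x ∂μ := by
    rw [setLIntegral_congr Ioi_ae_eq_Ici, ← (Measure.measurePreserving_neg μ)
      |>.setLIntegral_comp_preimage_emb (MeasurableEquiv.neg ℝ).measurableEmbedding G (Ici 0)]
    simp [hG]
  rw [← lintegral_add_compl G measurableSet_Ioi, compl_Ioi, hIic, two_mul]

lemma lintegral_rpow_le_measure_univ_rpow_mul {α : Type*} [MeasurableSpace α] {ν : Measure α}
    {H : α → ℝ≥0∞} (hH : AEMeasurable H ν) {q : ℝ} (hq : 1 ≤ q) :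
    (∫⁻ a, H a ∂ν) ^ q ≤ ν univ ^ (q - 1) * ∫⁻ a, H a ^ q ∂ν := by
  rcases hq.eq_or_lt with rfl | hq
  · simp
  have hHolder := ENNReal.lintegral_mul_le_Lp_mul_Lq ν (.conjExponent hq) hH
    (aemeasurable_const (b := 1))
  simp only [Pi.mul_apply, mul_one, ENNReal.one_rpow, lintegral_const, one_mul] at hHolder
  calc (∫⁻ a, H a ∂ν) ^ q
      ≤ ((∫⁻ a, H a ^ q ∂ν) ^ (1 / q) * ν univ ^ (1 / q.conjExponent)) ^ q := by gcongr
    _ = ν univ ^ (q - 1) * ∫⁻ a, H a ^ q ∂ν := by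
      rw [ENNReal.mul_rpow_of_nonneg _ _ (by linarith), ← ENNReal.rpow_mul, ← ENNReal.rpow_mul,
        one_div_mul_cancel (by linarith), ENNReal.rpow_one, mul_comm]
      congr 2
      rw [Real.conjExponent]; field_simp

lemma eLpNorm_le_mul_of_lintegral_rpow_le {α E F : Type*} [MeasurableSpace α] {μ : Measure α}
    [ENorm E] [ENorm F] {p : ℝ≥0∞} (hp₀ : p ≠ 0) (hp : p ≠ ∞) {g : α → E} {f : α → F}
    {K : ℝ≥0∞} (h : ∫⁻ a, ‖g a‖ₑ ^ p.toReal ∂μ ≤ K ^ p.toReal * ∫⁻ a, ‖f a‖ₑ ^ p.toReal ∂μ) :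
    eLpNorm g p μ ≤ K * eLpNorm f p μ := by
  have hq : 0 < p.toReal := ENNReal.toReal_pos hp₀ hp
  rw [eLpNorm_eq_lintegral_rpow_enorm_toReal hp₀ hp, eLpNorm_eq_lintegral_rpow_enorm_toReal hp₀ hp]
  calc (∫⁻ a, ‖g a‖ₑ ^ p.toReal ∂μ) ^ (1 / p.toReal)
      ≤ (K ^ p.toReal * ∫⁻ a, ‖f a‖ₑ ^ p.toReal ∂μ) ^ (1 / p.toReal) := by gcongr
    _ = K * (∫⁻ a, ‖f a‖ₑ ^ p.toReal ∂μ) ^ (1 / p.toReal) := by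
      rw [ENNReal.mul_rpow_of_nonneg _ _ (by positivity), ← ENNReal.rpow_mul,
        mul_one_div_cancel hq.ne', ENNReal.rpow_one]

lemma enorm_le_eLpNorm_top_of_continuous {X E : Type*} [TopologicalSpace X] [MeasurableSpace X]
    {μ : Measure X} [μ.IsOpenPosMeasure] [NormedAddCommGroup E] {f : X → E} (hf : Continuous f)
    (x : X) : ‖f x‖ₑ ≤ eLpNorm f ∞ μ := by
  by_contra hx
  have hU : IsOpen {y | eLpNorm f ∞ μ < ‖f y‖ₑ} := isOpen_lt continuous_const hf.enorm
  have hnull : μ {y | eLpNorm f ∞ μ < ‖f y‖ₑ} = 0 := by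
    simpa only [eLpNorm_exponent_top, not_le] using ae_iff.1 (enorm_ae_le_eLpNormEssSup f μ)
  exact ((hU.measure_eq_zero_iff μ).1 hnull).subset (not_le.1 hx)

lemma setLIntegral_Ioo_eq_lintegral_ite {μ : Measure ℝ} (a b : ℝ) (f : ℝ → ℝ≥0∞) :
    ∫⁻ z in Ioo a b, f z ∂μ = ∫⁻ z, if a < z ∧ z < b then f z else 0 ∂μ := by
  simp only [← lintegral_indicator measurableSet_Ioo, indicator_apply, mem_Ioo]

lemma mem_triangle_comm {x y z : ℝ} :
    (0 < y ∧ |x - y| < z ∧ z < x + y) ↔ (0 < z ∧ |x - z| < y ∧ y < x + z) := by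
  simp only [abs_lt]
  constructor <;> rintro ⟨h₁, ⟨h₂, h₃⟩, h₄⟩ <;> refine ⟨?_, ⟨?_, ?_⟩, ?_⟩ <;> linarith

lemma lintegral_Ioi_lintegral_Ioo_swap {μ : Measure ℝ} [SFinite μ] {x : ℝ} {F : ℝ → ℝ → ℝ≥0∞}
    (hF : Measurable (Function.uncurry F)) :
    ∫⁻ y in Ioi 0, ∫⁻ z in Ioo |x - y| (x + y), F y z ∂μ ∂μ
      = ∫⁻ z in Ioi 0, ∫⁻ y in Ioo |x - z| (x + z), F y z ∂μ ∂μ := by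
  have hT : MeasurableSet {p : ℝ × ℝ | 0 < p.1 ∧ |x - p.1| < p.2 ∧ p.2 < x + p.1} := by
    measurability
  have hleft (y : ℝ) : (Ioi 0).indicator (fun y => ∫⁻ z in Ioo |x - y| (x + y), F y z ∂μ) y
      = ∫⁻ z, if 0 < y ∧ |x - y| < z ∧ z < x + y then F y z else 0 ∂μ := by
    by_cases hy : 0 < y <;> simp [hy, setLIntegral_Ioo_eq_lintegral_ite]
  have hright (z : ℝ) : (Ioi 0).indicator (fun z => ∫⁻ y in Ioo |x - z| (x + z), F y z ∂μ) z
      = ∫⁻ y, if 0 < y ∧ |x - y| < z ∧ z < x + y then F y z else 0 ∂μ := by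
    simp_rw [mem_triangle_comm]
    by_cases hz : 0 < z <;> simp [hz, setLIntegral_Ioo_eq_lintegral_ite]
  rw [← lintegral_indicator measurableSet_Ioi, ← lintegral_indicator measurableSet_Ioi]
  simp_rw [hleft, hright]
  exact lintegral_lintegral_swap (Measurable.ite hT hF measurable_const).aemeasurable

variable {κ : ℝ}

instance : (muK1 κ).IsNegInvariant :=
  isNegInvariant_withDensity fun x => by rw [abs_neg]

instance : (muK1 κ).IsOpenPosMeasure :=
  (withDensity_absolutelyContinuous' (by fun_prop) <| (Measure.ae_ne volume 0).mono fun x hx =>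
    (ENNReal.ofReal_pos.2 (Real.rpow_pos_of_pos (abs_pos.2 hx) _)).ne').isOpenPosMeasure

lemma lintegral_muK1_eq_two_mul_setLIntegral_Ioi {F : ℝ → ℝ≥0∞} (hF : ∀ x, F (-x) = F x) :
    ∫⁻ x, F x ∂muK1 κ = 2 * ∫⁻ x in Ioi 0, ENNReal.ofReal (x ^ (2 * κ)) * F x := by
  rw [muK1, lintegral_withDensity_eq_lintegral_mul_non_measurable _ (by fun_prop)
    (ae_of_all _ fun _ => ENNReal.ofReal_lt_top), lintegral_eq_two_mul_setLIntegral_Ioi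
    fun x => by simp [hF]]
  congr 1
  exact setLIntegral_congr_fun measurableSet_Ioi fun x hx => by simp [abs_of_pos hx.out]

/-- `Φ_κ(t) dt = M_κ (1 + t) d(gegenbauerMeasure κ)(t)`. -/
def gegenbauerMeasure (κ : ℝ) : Measure ℝ :=
  (volume.restrict (Ioo (-1) 1)).withDensity fun t => ENNReal.ofReal ((1 - t ^ 2) ^ (κ - 1))

instance : SFinite (gegenbauerMeasure κ) := by unfold gegenbauerMeasure; infer_instance

instance : (gegenbauerMeasure κ).IsNegInvariant :=
  have : (volume.restrict (Ioo (-1 : ℝ) 1)).IsNegInvariant := isNegInvariant_restrict (by simp)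
  isNegInvariant_withDensity fun t => by rw [neg_sq]

lemma lintegral_gegenbauerMeasure (g : ℝ → ℝ≥0∞) :
    ∫⁻ t, g t ∂gegenbauerMeasure κ
      = ∫⁻ t in Ioo (-1) 1, ENNReal.ofReal ((1 - t ^ 2) ^ (κ - 1)) * g t :=
  lintegral_withDensity_eq_lintegral_mul_non_measurable _ (by fun_prop)
    (ae_of_all _ fun _ => ENNReal.ofReal_lt_top) g

lemma rpow_le_max_of_mem_Icc {u : ℝ} (hu : u ∈ Icc (1 : ℝ) 2) :
    u ^ (κ - 1) ≤ max 1 (2 ^ (κ - 1)) := by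
  rcases le_total 0 (κ - 1) with hκ | hκ
  · exact (Real.rpow_le_rpow (by linarith [hu.1]) hu.2 hκ).trans (le_max_right _ _)
  · exact (Real.rpow_le_one_of_one_le_of_nonpos hu.1 hκ).trans (le_max_left _ _)

lemma one_sub_sq_rpow_le {t : ℝ} (ht : t ∈ Ioo (-1 : ℝ) 1) :
    (1 - t ^ 2) ^ (κ - 1) ≤ max 1 (2 ^ (κ - 1)) * ((1 + t) ^ (κ - 1) + (1 - t) ^ (κ - 1)) := by
  obtain ⟨ht₁, ht₂⟩ := ht
  have hfac : (1 - t ^ 2) ^ (κ - 1) = (1 + t) ^ (κ - 1) * (1 - t) ^ (κ - 1) := by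
    rw [← Real.mul_rpow (by linarith) (by linarith)]; ring_nf
  have hadd : 0 ≤ (1 + t) ^ (κ - 1) := Real.rpow_nonneg (by linarith) _
  have hsub : 0 ≤ (1 - t) ^ (κ - 1) := Real.rpow_nonneg (by linarith) _
  rw [hfac]
  rcases le_total t 0 with ht | ht
  · have := rpow_le_max_of_mem_Icc (κ := κ) (u := 1 - t) ⟨by linarith, by linarith⟩
    nlinarith
  · have := rpow_le_max_of_mem_Icc (κ := κ) (u := 1 + t) ⟨by linarith, by linarith⟩
    nlinarith

lemma integrableOn_one_sub_sq_rpow (hκ : 0 < κ) :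
    IntegrableOn (fun t : ℝ => (1 - t ^ 2) ^ (κ - 1)) (Ioo (-1) 1) := by
  have hpow : IntervalIntegrable (fun u : ℝ => u ^ (κ - 1)) volume 0 2 :=
    intervalIntegral.intervalIntegrable_rpow' (by linarith)
  have hadd : IntegrableOn (fun t : ℝ => (1 + t) ^ (κ - 1)) (Ioo (-1) 1) := by
    simpa [intervalIntegrable_iff_integrableOn_Ioo_of_le, show (2 : ℝ) - 1 = 1 by norm_num]
      using hpow.comp_add_left 1
  have hsub : IntegrableOn (fun t : ℝ => (1 - t) ^ (κ - 1)) (Ioo (-1) 1) := by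
    simpa [intervalIntegrable_iff_integrableOn_Ioo_of_le, show (1 : ℝ) - 2 = -1 by norm_num]
      using (hpow.comp_sub_left 1).symm
  refine ((hadd.add hsub).const_mul (max 1 (2 ^ (κ - 1)))).mono'
    (Measurable.aestronglyMeasurable (by fun_prop)) ?_
  refine (ae_restrict_iff' measurableSet_Ioo).2 (ae_of_all _ fun t ht => ?_)
  rw [Real.norm_of_nonneg (Real.rpow_nonneg (by nlinarith [ht.1, ht.2]) _)]
  exact one_sub_sq_rpow_le ht

lemma isFiniteMeasure_gegenbauerMeasure (hκ : 0 < κ) : IsFiniteMeasure (gegenbauerMeasure κ) :=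
  isFiniteMeasure_withDensity_ofReal (integrableOn_one_sub_sq_rpow hκ).2

lemma gegenbauerMeasure_univ_ne_zero : gegenbauerMeasure κ univ ≠ 0 := by
  rw [gegenbauerMeasure, Ne, withDensity_apply_eq_zero' (by fun_prop), inter_univ,
    Measure.restrict_apply' measurableSet_Ioo]
  have hpos : Ioo (-1 : ℝ) 1 ⊆ {t | ENNReal.ofReal ((1 - t ^ 2) ^ (κ - 1)) ≠ 0} := fun t ht =>
    (ENNReal.ofReal_pos.2 (Real.rpow_pos_of_pos (by nlinarith [ht.1, ht.2]) _)).ne'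
  rw [inter_eq_self_of_subset_right hpos, Real.volume_Ioo]
  norm_num

def cosineSide (x y t : ℝ) : ℝ := √(x ^ 2 + y ^ 2 + 2 * x * y * t)

lemma cosineSide_nonneg (x y t : ℝ) : 0 ≤ cosineSide x y t := Real.sqrt_nonneg _

lemma cosineSide_neg_left (x y t : ℝ) : cosineSide (-x) y t = cosineSide x y (-t) := by
  unfold cosineSide; ring_nf

lemma cosineSide_neg_middle (x y t : ℝ) : cosineSide x (-y) t = cosineSide x y (-t) := by
  unfold cosineSide; ring_nf

lemma cosineSide_zero_left (y t : ℝ) : cosineSide 0 y t = |y| := by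
  simp [cosineSide, Real.sqrt_sq_eq_abs]

lemma sq_add_sq_add_mul_nonneg {x y t : ℝ} (ht : t ∈ Icc (-1 : ℝ) 1) :
    0 ≤ x ^ 2 + y ^ 2 + 2 * x * y * t := by
  nlinarith [mul_nonneg (sub_nonneg.2 ht.1) (sq_nonneg (x + y)),
    mul_nonneg (sub_nonneg.2 ht.2) (sq_nonneg (x - y))]

lemma one_add_mul_abs_add_le {x y t : ℝ} (ht : t ∈ Icc (-1 : ℝ) 1) :
    (1 + t) * |x + y| ≤ 2 * cosineSide x y t := by
  have hs := sq_add_sq_add_mul_nonneg (x := x) (y := y) ht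
  refine (pow_le_pow_iff_left₀ (mul_nonneg (neg_le_iff_add_nonneg'.1 ht.1) (abs_nonneg _))
    (by have := cosineSide_nonneg x y t; positivity) two_ne_zero).1 ?_
  rw [mul_pow, mul_pow, sq_abs, cosineSide, Real.sq_sqrt hs]
  -- `2 (x² + y² + 2xyt) = (1 + t) (x + y)² + (1 - t) (x - y)²` and `1 + t ≤ 2`
  nlinarith [mul_nonneg (sub_nonneg.2 ht.2) (sq_nonneg (x - y)),
    mul_nonneg (sub_nonneg.2 ht.2) (mul_nonneg (neg_le_iff_add_nonneg'.1 ht.1) (sq_nonneg (x + y)))]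

lemma abs_div_cosineSide_mul_le {x y t : ℝ} (ht : t ∈ Icc (-1 : ℝ) 1) :
    |(x + y) / cosineSide x y t| * (1 + t) ≤ 2 := by
  rcases (cosineSide_nonneg x y t).eq_or_lt with h | h
  · rw [← h, div_zero, abs_zero, zero_mul]; norm_num
  · rw [abs_div, abs_of_pos h, div_mul_eq_mul_div, div_le_iff₀ h, mul_comm]
    exact one_add_mul_abs_add_le ht

lemma abs_one_add_mul_le {b t : ℝ} (ht : t ∈ Ioo (-1 : ℝ) 1) (hb : |b| * (1 + t) ≤ 2) :
    |1 + b| * (1 + t) ≤ 4 := by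
  have := mul_le_mul_of_nonneg_right (abs_add_le 1 b) (by linarith [ht.1] : 0 ≤ 1 + t)
  rw [abs_one] at this
  linarith [ht.2]

lemma Mconst_pos (hκ : 0 < κ) : 0 < Mconst κ :=
  div_pos (Real.Gamma_pos_of_pos (by linarith))
    (mul_pos (Real.Gamma_pos_of_pos hκ) (Real.Gamma_pos_of_pos (by norm_num)))

lemma enorm_half_mul_setIntegral_le (hκ : 0 < κ) {g c : ℝ → ℝ}
    (hc : ∀ t ∈ Ioo (-1 : ℝ) 1, |c t| * (1 + t) ≤ 4) :
    ‖(1 / 2) * ∫ t in Ioo (-1 : ℝ) 1, g t * c t * (Mconst κ * (1 + t) * (1 - t ^ 2) ^ (κ - 1))‖ₑ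
      ≤ ENNReal.ofReal (2 * Mconst κ) * ∫⁻ t, ‖g t‖ₑ ∂gegenbauerMeasure κ := by
  have hM := (Mconst_pos hκ).le
  rw [lintegral_gegenbauerMeasure, ← lintegral_const_mul' _ _ ENNReal.ofReal_ne_top, enorm_mul]
  calc ‖(1 / 2 : ℝ)‖ₑ
        * ‖∫ t in Ioo (-1 : ℝ) 1, g t * c t * (Mconst κ * (1 + t) * (1 - t ^ 2) ^ (κ - 1))‖ₑ
      ≤ ‖(1 / 2 : ℝ)‖ₑ * ∫⁻ t in Ioo (-1 : ℝ) 1,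
          ‖g t * c t * (Mconst κ * (1 + t) * (1 - t ^ 2) ^ (κ - 1))‖ₑ := by
        gcongr; exact enorm_integral_le_lintegral_enorm _
    _ = ∫⁻ t in Ioo (-1 : ℝ) 1,
          ‖(1 / 2) * (g t * c t * (Mconst κ * (1 + t) * (1 - t ^ 2) ^ (κ - 1)))‖ₑ := by
        rw [← lintegral_const_mul' _ _ enorm_ne_top]
        simp only [enorm_mul]
    _ ≤ _ := by
        refine setLIntegral_mono' measurableSet_Ioo fun t ht => ?_
        have hw : 0 ≤ (1 - t ^ 2) ^ (κ - 1) := Real.rpow_nonneg (by nlinarith [ht.1, ht.2]) _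
        have ht' : 0 ≤ 1 + t := by linarith [ht.1]
        rw [enorm_eq_ofReal_abs, enorm_eq_ofReal_abs, ← ENNReal.ofReal_mul hw,
          ← ENNReal.ofReal_mul (by positivity)]
        refine ENNReal.ofReal_le_ofReal ?_
        rw [abs_mul, abs_mul, abs_mul, abs_of_nonneg (by positivity :
          0 ≤ Mconst κ * (1 + t) * (1 - t ^ 2) ^ (κ - 1)), abs_of_pos (by norm_num : (0:ℝ) < 1 / 2)]
        have := mul_le_mul_of_nonneg_left (hc t ht)
          (mul_nonneg (mul_nonneg hM hw) (abs_nonneg (g t)))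
        linarith

lemma enorm_tauK_le (hκ : 0 < κ) (x : ℝ) (f : ℝ → ℝ) (y : ℝ) :
    ‖tauK κ x f y‖ₑ ≤ ENNReal.ofReal (2 * Mconst κ) *
      ∫⁻ t, ‖f (cosineSide x y t)‖ₑ + ‖f (-cosineSide x y t)‖ₑ ∂gegenbauerMeasure κ := by
  have hb (t) (ht : t ∈ Ioo (-1 : ℝ) 1) : |(x + y) / cosineSide x y t| * (1 + t) ≤ 2 :=
    abs_div_cosineSide_mul_le (Ioo_subset_Icc_self ht)
  calc ‖tauK κ x f y‖ₑ ≤ _ := enorm_add_le _ _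
    _ ≤ ENNReal.ofReal (2 * Mconst κ) * ∫⁻ t, ‖f (cosineSide x y t)‖ₑ ∂gegenbauerMeasure κ
        + ENNReal.ofReal (2 * Mconst κ) * ∫⁻ t, ‖f (-cosineSide x y t)‖ₑ ∂gegenbauerMeasure κ :=
      add_le_add ?_ ?_
    _ ≤ _ := by rw [← mul_add]; gcongr; exact le_lintegral_add _ _
  · exact enorm_half_mul_setIntegral_le hκ (g := fun t => f (cosineSide x y t))
      (c := fun t => 1 + (x + y) / cosineSide x y t) fun t ht => abs_one_add_mul_le ht (hb t ht)
  · refine enorm_half_mul_setIntegral_le hκ (g := fun t => f (-cosineSide x y t))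
      (c := fun t => 1 - (x + y) / cosineSide x y t) fun t ht => ?_
    have hb' : |-((x + y) / cosineSide x y t)| * (1 + t) ≤ 2 := by rw [abs_neg]; exact hb t ht
    simpa [sub_eq_add_neg] using abs_one_add_mul_le ht hb'

def cosineSideInv (x y z : ℝ) : ℝ := (z ^ 2 - x ^ 2 - y ^ 2) / (2 * x * y)

lemma cosineSide_cosineSideInv {x y z : ℝ} (hx : x ≠ 0) (hy : y ≠ 0) (hz : 0 ≤ z) :
    cosineSide x y (cosineSideInv x y z) = z := by
  rw [cosineSide, cosineSideInv, show x ^ 2 + y ^ 2 + 2 * x * y * ((z ^ 2 - x ^ 2 - y ^ 2) /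
    (2 * x * y)) = z ^ 2 by field_simp; ring, Real.sqrt_sq hz]

lemma sq_lt_sq_of_mem_Ioo {x y z : ℝ} (hz : z ∈ Ioo |x - y| (x + y)) :
    (x - y) ^ 2 < z ^ 2 ∧ z ^ 2 < (x + y) ^ 2 := by
  have hz₀ : 0 ≤ z := (abs_nonneg _).trans hz.1.le
  refine ⟨?_, pow_lt_pow_left₀ hz.2 hz₀ two_ne_zero⟩
  rw [← sq_abs]
  exact pow_lt_pow_left₀ hz.1 (abs_nonneg _) two_ne_zero

lemma image_cosineSideInv_Ioo {x y : ℝ} (hx : 0 < x) (hy : 0 < y) :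
    cosineSideInv x y '' Ioo |x - y| (x + y) = Ioo (-1) 1 := by
  have hxy : 0 < 2 * x * y := by positivity
  ext t
  constructor
  · rintro ⟨z, hz, rfl⟩
    obtain ⟨h₁, h₂⟩ := sq_lt_sq_of_mem_Ioo hz
    constructor
    · rw [cosineSideInv, lt_div_iff₀ hxy]; nlinarith
    · rw [cosineSideInv, div_lt_iff₀ hxy]; nlinarith
  · rintro ⟨ht₁, ht₂⟩
    have hs := sq_add_sq_add_mul_nonneg (x := x) (y := y) (Ioo_subset_Icc_self ⟨ht₁, ht₂⟩)
    refine ⟨cosineSide x y t, ⟨?_, ?_⟩, ?_⟩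
    · rw [← Real.sqrt_sq_eq_abs]
      exact Real.sqrt_lt_sqrt (sq_nonneg _) (by nlinarith [mul_pos hx hy])
    · rw [← Real.sqrt_sq (by positivity : 0 ≤ x + y)]
      exact Real.sqrt_lt_sqrt hs (by nlinarith [mul_pos hx hy])
    · rw [cosineSideInv, cosineSide, Real.sq_sqrt hs]
      field_simp
      ring

lemma injOn_cosineSideInv {x y : ℝ} (hx : 0 < x) (hy : 0 < y) :
    InjOn (cosineSideInv x y) (Ioo |x - y| (x + y)) := by
  intro a ha b hb hab
  have hsq : a ^ 2 = b ^ 2 := by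
    rw [cosineSideInv, cosineSideInv] at hab
    field_simp at hab; linarith
  exact (pow_left_inj₀ ((abs_nonneg _).trans ha.1.le) ((abs_nonneg _).trans hb.1.le)
    two_ne_zero).1 hsq

lemma hasDerivAt_cosineSideInv {x y : ℝ} (hx : x ≠ 0) (hy : y ≠ 0) (z : ℝ) :
    HasDerivAt (cosineSideInv x y) (z / (x * y)) z := by
  refine ((((hasDerivAt_pow 2 z).sub_const (x ^ 2)).sub_const (y ^ 2)).div_const
    (2 * x * y)).congr_deriv ?_
  field_simp; ring

/-- `y^{2κ} dν(t) = triangleKernel κ x y z dz` under `z = cosineSide x y t`. -/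
def triangleKernel (κ x y z : ℝ) : ℝ :=
  y * z / x * (y ^ 2 - ((z ^ 2 - x ^ 2 - y ^ 2) / (2 * x)) ^ 2) ^ (κ - 1)

lemma triangleKernel_comm {x : ℝ} (hx : x ≠ 0) (y z : ℝ) :
    triangleKernel κ x y z = triangleKernel κ x z y := by
  have h : y ^ 2 - ((z ^ 2 - x ^ 2 - y ^ 2) / (2 * x)) ^ 2
      = z ^ 2 - ((y ^ 2 - x ^ 2 - z ^ 2) / (2 * x)) ^ 2 := by
    field_simp; ring
  rw [triangleKernel, triangleKernel, h, mul_comm y z]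

lemma rpow_mul_deriv_mul_weight_cosineSideInv {x y z : ℝ} (hx : 0 < x) (hy : 0 < y)
    (hz : z ∈ Ioo |x - y| (x + y)) :
    y ^ (2 * κ) * (z / (x * y)) * (1 - cosineSideInv x y z ^ 2) ^ (κ - 1)
      = triangleKernel κ x y z := by
  have hD : 0 ≤ y ^ 2 - ((z ^ 2 - x ^ 2 - y ^ 2) / (2 * x)) ^ 2 := by
    obtain ⟨h₁, h₂⟩ := sq_lt_sq_of_mem_Ioo hz
    have hxy : 0 < x * y := mul_pos hx hy
    rw [sub_nonneg, div_pow, div_le_iff₀ (by positivity)]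
    nlinarith [mul_pos (by nlinarith : 0 < 2 * x * y - (z ^ 2 - x ^ 2 - y ^ 2))
      (by nlinarith : 0 < 2 * x * y + (z ^ 2 - x ^ 2 - y ^ 2))]
  have hcos : 1 - cosineSideInv x y z ^ 2
      = (y ^ 2 - ((z ^ 2 - x ^ 2 - y ^ 2) / (2 * x)) ^ 2) / y ^ 2 := by
    rw [cosineSideInv]; field_simp
  have hpow : y ^ (2 * κ) = y ^ 2 * (y ^ 2) ^ (κ - 1) := by
    rw [← Real.rpow_natCast, ← Real.rpow_mul hy.le, ← Real.rpow_add hy]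
    congr 1; push_cast; ring
  have hP : 0 < (y ^ 2) ^ (κ - 1) := Real.rpow_pos_of_pos (by positivity) _
  rw [hcos, Real.div_rpow hD (sq_nonneg y), hpow, triangleKernel]
  field_simp

lemma rpow_mul_lintegral_comp_cosineSide {x y : ℝ} (hx : 0 < x) (hy : 0 < y) (g : ℝ → ℝ≥0∞) :
    ENNReal.ofReal (y ^ (2 * κ)) * ∫⁻ t, g (cosineSide x y t) ∂gegenbauerMeasure κ
      = ∫⁻ z in Ioo |x - y| (x + y), ENNReal.ofReal (triangleKernel κ x y z) * g z := by
  rw [lintegral_gegenbauerMeasure, ← image_cosineSideInv_Ioo hx hy,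
    lintegral_image_eq_lintegral_abs_deriv_mul measurableSet_Ioo
      (fun z _ => (hasDerivAt_cosineSideInv hx.ne' hy.ne' z).hasDerivWithinAt)
      (injOn_cosineSideInv hx hy), ← lintegral_const_mul' _ _ ENNReal.ofReal_ne_top]
  refine setLIntegral_congr_fun measurableSet_Ioo fun z hz => ?_
  have hz₀ : 0 < z := (abs_nonneg _).trans_lt hz.1
  rw [cosineSide_cosineSideInv hx.ne' hy.ne' hz₀.le, abs_of_pos (by positivity), ← mul_assoc,
    ← mul_assoc, ← ENNReal.ofReal_mul (by positivity), ← ENNReal.ofReal_mul (by positivity),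
    rpow_mul_deriv_mul_weight_cosineSideInv hx hy hz]

lemma setLIntegral_Ioi_rpow_mul_lintegral_comp_cosineSide {x : ℝ} (hx : 0 < x)
    {g : ℝ → ℝ≥0∞} (hg : Measurable g) :
    ∫⁻ y in Ioi 0, ENNReal.ofReal (y ^ (2 * κ)) * ∫⁻ t, g (cosineSide x y t) ∂gegenbauerMeasure κ
      = gegenbauerMeasure κ univ * ∫⁻ z in Ioi 0, ENNReal.ofReal (z ^ (2 * κ)) * g z := by
  have hK : Measurable fun p : ℝ × ℝ => ENNReal.ofReal (triangleKernel κ x p.1 p.2) := by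
    unfold triangleKernel; fun_prop
  calc ∫⁻ y in Ioi 0, ENNReal.ofReal (y ^ (2 * κ)) * ∫⁻ t, g (cosineSide x y t) ∂gegenbauerMeasure κ
      = ∫⁻ y in Ioi 0, ∫⁻ z in Ioo |x - y| (x + y), ENNReal.ofReal (triangleKernel κ x y z) * g z :=
        setLIntegral_congr_fun measurableSet_Ioi fun y hy =>
          rpow_mul_lintegral_comp_cosineSide hx hy g
    _ = ∫⁻ z in Ioi 0, ∫⁻ y in Ioo |x - z| (x + z), ENNReal.ofReal (triangleKernel κ x y z) * g z :=
        lintegral_Ioi_lintegral_Ioo_swap (hK.mul (hg.comp measurable_snd))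
    _ = ∫⁻ z in Ioi 0, gegenbauerMeasure κ univ * (ENNReal.ofReal (z ^ (2 * κ)) * g z) := by
        refine setLIntegral_congr_fun measurableSet_Ioi fun z hz => ?_
        have hKz : Measurable fun y => ENNReal.ofReal (triangleKernel κ x z y) :=
          hK.comp measurable_prodMk_left
        have hmass := rpow_mul_lintegral_comp_cosineSide (κ := κ) hx hz fun _ => 1
        simp only [mul_one, lintegral_one] at hmass
        simp_rw [triangleKernel_comm hx.ne' _ z]
        rw [lintegral_mul_const _ hKz, ← hmass]
        ring
    _ = _ := lintegral_const_mul _ (by fun_prop)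

lemma lintegral_comp_cosineSide_abs_left (x y : ℝ) (g : ℝ → ℝ≥0∞) :
    ∫⁻ t, g (cosineSide |x| y t) ∂gegenbauerMeasure κ
      = ∫⁻ t, g (cosineSide x y t) ∂gegenbauerMeasure κ := by
  rcases abs_choice x with h | h
  · rw [h]
  · simp_rw [h, cosineSide_neg_left]
    exact lintegral_neg_eq_self fun t => g (cosineSide x y t)

lemma lintegral_comp_cosineSide_neg_middle (x y : ℝ) (g : ℝ → ℝ≥0∞) :
    ∫⁻ t, g (cosineSide x (-y) t) ∂gegenbauerMeasure κ
      = ∫⁻ t, g (cosineSide x y t) ∂gegenbauerMeasure κ := by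
  simp_rw [cosineSide_neg_middle]
  exact lintegral_neg_eq_self fun t => g (cosineSide x y t)

theorem lintegral_muK1_lintegral_comp_cosineSide (x : ℝ) {g : ℝ → ℝ≥0∞} (hg : Measurable g) :
    ∫⁻ y, ∫⁻ t, g (cosineSide x y t) ∂gegenbauerMeasure κ ∂muK1 κ
      = gegenbauerMeasure κ univ * ∫⁻ z, g |z| ∂muK1 κ := by
  rcases eq_or_ne x 0 with rfl | hx
  · simp_rw [cosineSide_zero_left, lintegral_const]
    rw [lintegral_mul_const (f := fun y => g |y|) _ (hg.comp measurable_abs), mul_comm]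
  rw [lintegral_muK1_eq_two_mul_setLIntegral_Ioi (lintegral_comp_cosineSide_neg_middle x · g),
    lintegral_muK1_eq_two_mul_setLIntegral_Ioi fun z => by rw [abs_neg]]
  simp_rw [← lintegral_comp_cosineSide_abs_left x]
  have hIoi : ∫⁻ z in Ioi 0, ENNReal.ofReal (z ^ (2 * κ)) * g |z|
      = ∫⁻ z in Ioi 0, ENNReal.ofReal (z ^ (2 * κ)) * g z :=
    setLIntegral_congr_fun measurableSet_Ioi fun z (hz : 0 < z) => by rw [abs_of_pos hz]
  rw [setLIntegral_Ioi_rpow_mul_lintegral_comp_cosineSide (abs_pos.2 hx) hg, hIoi]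
  ring

lemma measurable_tauK (x : ℝ) {f : ℝ → ℝ} (hf : Measurable f) : Measurable (tauK κ x f) := by
  unfold tauK
  refine (Measurable.const_mul ?_ _).add (Measurable.const_mul ?_ _) <;>
  refine (StronglyMeasurable.integral_prod_right (Measurable.stronglyMeasurable ?_)).measurable <;>
  simp only [Function.uncurry_def] <;> fun_prop

lemma enorm_tauK_rpow_le (hκ : 0 < κ) (x : ℝ) {f : ℝ → ℝ} (hf : Measurable f) {q : ℝ}
    (hq : 1 ≤ q) (y : ℝ) :
    ‖tauK κ x f y‖ₑ ^ q ≤ ENNReal.ofReal (2 * Mconst κ) ^ q * gegenbauerMeasure κ univ ^ (q - 1)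
      * 2 ^ (q - 1) * ∫⁻ t, ‖f (cosineSide x y t)‖ₑ ^ q + ‖f (-cosineSide x y t)‖ₑ ^ q
        ∂gegenbauerMeasure κ := by
  set A := ENNReal.ofReal (2 * Mconst κ)
  set B := gegenbauerMeasure κ univ
  have hφ : Measurable (cosineSide x y) := by unfold cosineSide; fun_prop
  calc ‖tauK κ x f y‖ₑ ^ q
      ≤ (A * ∫⁻ t, ‖f (cosineSide x y t)‖ₑ + ‖f (-cosineSide x y t)‖ₑ ∂gegenbauerMeasure κ) ^ q := by
        gcongr; exact enorm_tauK_le hκ x f y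
    _ ≤ A ^ q * (B ^ (q - 1) * ∫⁻ t, (‖f (cosineSide x y t)‖ₑ + ‖f (-cosineSide x y t)‖ₑ) ^ q
          ∂gegenbauerMeasure κ) := by
        rw [ENNReal.mul_rpow_of_nonneg _ _ (by linarith)]
        gcongr
        exact lintegral_rpow_le_measure_univ_rpow_mul (by fun_prop) hq
    _ ≤ A ^ q * (B ^ (q - 1) * ∫⁻ t, 2 ^ (q - 1) * (‖f (cosineSide x y t)‖ₑ ^ q
          + ‖f (-cosineSide x y t)‖ₑ ^ q) ∂gegenbauerMeasure κ) := by
        gcongr with t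
        exact ENNReal.rpow_add_le_mul_rpow_add_rpow _ _ hq
    _ = _ := by
        rw [lintegral_const_mul' _ _ (ENNReal.rpow_ne_top_of_nonneg (by linarith) (by simp))]
        ring

lemma lintegral_enorm_tauK_rpow_le (hκ : 0 < κ) (x : ℝ) {f : ℝ → ℝ} (hf : Measurable f) {q : ℝ}
    (hq : 1 ≤ q) :
    ∫⁻ y, ‖tauK κ x f y‖ₑ ^ q ∂muK1 κ
      ≤ (2 * ENNReal.ofReal (2 * Mconst κ) * gegenbauerMeasure κ univ) ^ q
        * ∫⁻ y, ‖f y‖ₑ ^ q ∂muK1 κ := by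
  set A := ENNReal.ofReal (2 * Mconst κ)
  set B := gegenbauerMeasure κ univ
  set h : ℝ → ℝ≥0∞ := fun z => ‖f z‖ₑ ^ q + ‖f (-z)‖ₑ ^ q with h_def
  have hh : Measurable h := by fun_prop
  have hφ : Measurable fun p : ℝ × ℝ => cosineSide x p.1 p.2 := by unfold cosineSide; fun_prop
  have hJ : Measurable fun y => ∫⁻ t, h (cosineSide x y t) ∂gegenbauerMeasure κ :=
    (hh.comp hφ).lintegral_prod_right'
  have heven (z : ℝ) : h |z| = h z := by
    rcases abs_choice z with hz | hz <;> rw [hz]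
    simp only [h_def, neg_neg, add_comm]
  have hsucc (a : ℝ≥0∞) : a ^ q = a ^ (q - 1) * a := by
    conv_lhs => rw [← sub_add_cancel q 1]
    rw [ENNReal.rpow_add_of_nonneg _ _ (by linarith) zero_le_one, ENNReal.rpow_one]
  calc ∫⁻ y, ‖tauK κ x f y‖ₑ ^ q ∂muK1 κ
      ≤ ∫⁻ y, A ^ q * B ^ (q - 1) * 2 ^ (q - 1) * ∫⁻ t, h (cosineSide x y t) ∂gegenbauerMeasure κ
          ∂muK1 κ := lintegral_mono (enorm_tauK_rpow_le hκ x hf hq)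
    _ = A ^ q * B ^ (q - 1) * 2 ^ (q - 1) * (B * (2 * ∫⁻ y, ‖f y‖ₑ ^ q ∂muK1 κ)) := by
      rw [lintegral_const_mul _ hJ, lintegral_muK1_lintegral_comp_cosineSide x hh,
        lintegral_congr heven, h_def, lintegral_add_left (by fun_prop),
        lintegral_neg_eq_self (μ := muK1 κ) (fun z => ‖f z‖ₑ ^ q), two_mul]
    _ = _ := by
      rw [ENNReal.mul_rpow_of_nonneg _ _ (by linarith),
        ENNReal.mul_rpow_of_nonneg _ _ (by linarith), hsucc 2, hsucc B]
      ring

lemma eLpNorm_tauK_le (hκ : 0 < κ) (x : ℝ) {f : ℝ → ℝ} (hf : Continuous f) {p : ℝ≥0∞}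
    (hp : 1 ≤ p) :
    eLpNorm (tauK κ x f) p (muK1 κ)
      ≤ 2 * ENNReal.ofReal (2 * Mconst κ) * gegenbauerMeasure κ univ * eLpNorm f p (muK1 κ) := by
  rcases eq_or_ne p ∞ with rfl | hp_top
  · calc eLpNorm (tauK κ x f) ∞ (muK1 κ) = eLpNormEssSup (tauK κ x f) (muK1 κ) :=
          eLpNorm_exponent_top
      _ ≤ _ := eLpNormEssSup_le_of_ae_enorm_bound <| ae_of_all _ fun y => calc
        ‖tauK κ x f y‖ₑ ≤ ENNReal.ofReal (2 * Mconst κ) * ∫⁻ t, ‖f (cosineSide x y t)‖ₑ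
            + ‖f (-cosineSide x y t)‖ₑ ∂gegenbauerMeasure κ := enorm_tauK_le hκ x f y
        _ ≤ ENNReal.ofReal (2 * Mconst κ)
              * ∫⁻ _, 2 * eLpNorm f ∞ (muK1 κ) ∂gegenbauerMeasure κ := by
          gcongr with t
          rw [two_mul]
          exact add_le_add (enorm_le_eLpNorm_top_of_continuous hf _)
            (enorm_le_eLpNorm_top_of_continuous hf _)
        _ = _ := by rw [lintegral_const]; ring
  · have hq : 1 ≤ p.toReal := by simpa using ENNReal.toReal_mono hp_top hp
    exact eLpNorm_le_mul_of_lintegral_rpow_le (zero_lt_one.trans_le hp).ne' hp_top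
      (lintegral_enorm_tauK_rpow_le hκ x hf.measurable hq)

end DunklTranslation

open DunklTranslation

/-- `L^p`-boundedness of the one-dimensional Dunkl translation, uniformly in `x`. -/
theorem dunkl_translation_Lp_bounded (κ : ℝ) (hκ : 0 < κ) (p : ℝ≥0∞) (hp : 1 ≤ p) :
    ∃ C : ℝ, 0 < C ∧ ∀ (x : ℝ) (f : ℝ → ℝ), Continuous f → (∃ B : ℝ, ∀ y, |f y| ≤ B) →
      MemLp f p (muK1 κ) →
      MemLp (tauK κ x f) p (muK1 κ) ∧
        eLpNorm (tauK κ x f) p (muK1 κ) ≤ ENNReal.ofReal C * eLpNorm f p (muK1 κ) := by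
  have hB : gegenbauerMeasure κ univ ≠ ∞ :=
    (isFiniteMeasure_gegenbauerMeasure hκ).measure_univ_lt_top.ne
  have hC : ENNReal.ofReal (4 * Mconst κ * (gegenbauerMeasure κ univ).toReal)
      = 2 * ENNReal.ofReal (2 * Mconst κ) * gegenbauerMeasure κ univ := by
    rw [ENNReal.ofReal_mul (by linarith [Mconst_pos hκ]), ENNReal.ofReal_toReal hB,
      show 4 * Mconst κ = 2 * (2 * Mconst κ) by ring, ENNReal.ofReal_mul zero_le_two,
      ENNReal.ofReal_ofNat]
  refine ⟨4 * Mconst κ * (gegenbauerMeasure κ univ).toReal, mul_pos (mul_pos four_pos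
    (Mconst_pos hκ)) (ENNReal.toReal_pos gegenbauerMeasure_univ_ne_zero hB), fun x f hf _ hfp => ?_⟩
  have hτ := eLpNorm_tauK_le hκ x hf hp
  rw [hC]
  exact ⟨⟨(measurable_tauK x hf.measurable).aestronglyMeasurable,
    hτ.trans_lt (ENNReal.mul_lt_top (by finiteness) hfp.2)⟩, hτ⟩
end
end

section
/- There exists a constant C > 0, depending only on κ, such that for all x, y ∈ ℝ and every r > 0, |τ_x^κ(χ_{[−r,r]})(y)| ≤ C · μ_κ((−r,r)) / μ_κ(I(x,r)), where I(x,r) = [max{0, |x|−r}, |x|+r). -/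
noncomputable section
open MeasureTheory Set Real
open scoped ENNReal NNReal

/-!
Write `E(t) = x² + y² + 2xyt`. Both integrals in Rösler's formula only see the `t` with
`E(t) ≤ r²`, and since `(x + y)²(1 + t) ≤ 2E(t)`, the factor `(1 ± (x + y)/√E(t))(1 + t)` is at
most `4`; hence `|τ_x χ(y)| ≤ 4 M_κ ∫_{E(t) ≤ r²} (1 - t²)^{κ-1} dt`. On that set
`1 - |t| ≤ 9r²/(|x| + r)²` (trivial for `|x| ≤ 2r`, and otherwise `(x ± y)² ≥ x²` for the sign
that matters), so the integral is `O((r/(|x| + r))^{2κ})`. On the other side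
`μ_κ((-r, r)) ≥ (r/2)^{2κ} r/2` and `μ_κ(I(x, r)) ≤ (|x| + r)^{2κ} 2r`.
-/

lemma Mconst_pos {κ : ℝ} (hκ : 0 < κ) : 0 < Mconst κ :=
  div_pos (Gamma_pos_of_pos (by linarith))
    (mul_pos (Gamma_pos_of_pos hκ) (Gamma_pos_of_pos one_half_pos))

lemma add_sq_mul_one_add_le {t : ℝ} (x y : ℝ) (ht : t ≤ 1) :
    (x + y) ^ 2 * (1 + t) ≤ 2 * (x ^ 2 + y ^ 2 + 2 * x * y * t) := by
  nlinarith [mul_nonneg (sub_nonneg.2 ht) (sq_nonneg (x - y))]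

lemma sub_sq_mul_one_sub_le {t : ℝ} (x y : ℝ) (ht : -1 ≤ t) :
    (x - y) ^ 2 * (1 - t) ≤ 2 * (x ^ 2 + y ^ 2 + 2 * x * y * t) := by
  nlinarith [mul_nonneg (neg_le_iff_add_nonneg'.1 ht) (sq_nonneg (x + y))]

lemma mul_abs_add_sq_le {a x y r : ℝ} (ha : 0 ≤ a) (ha1 : a ≤ 1) (hr : 0 ≤ r)
    (hadd : a * (x + y) ^ 2 ≤ 2 * r ^ 2) (hsub : (x - y) ^ 2 ≤ 2 * r ^ 2) :
    a * (|x| + r) ^ 2 ≤ 9 * r ^ 2 := by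
  rcases le_or_gt |x| (2 * r) with hx | hx
  · nlinarith [abs_nonneg x]
  · have hx4 : 4 * r ^ 2 < x ^ 2 := by
      nlinarith [sq_abs x, mul_self_lt_mul_self (by positivity : 0 ≤ 2 * r) hx]
    have hx2 : x ^ 2 ≤ (x + y) ^ 2 := by nlinarith [sq_nonneg y]
    have hxr : (|x| + r) ^ 2 ≤ 9 / 4 * x ^ 2 := by
      rw [← sq_abs x]; nlinarith
    nlinarith [mul_le_mul_of_nonneg_left hx2 ha, mul_le_mul_of_nonneg_left hxr ha]

lemma one_sub_abs_le_of_sq_add_sq_add_le {x y r t : ℝ} (hr : 0 < r) (ht : |t| < 1)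
    (hE : x ^ 2 + y ^ 2 + 2 * x * y * t ≤ r ^ 2) :
    1 - |t| ≤ (3 * r / (|x| + r)) ^ 2 := by
  obtain ⟨ht₁, ht₂⟩ := abs_lt.1 ht
  rw [div_pow, le_div_iff₀ (by positivity)]
  rcases abs_cases t with ⟨h, h0⟩ | ⟨h, h0⟩ <;> rw [h]
  · have key := mul_abs_add_sq_le (a := 1 - t) (x := x) (y := -y) (by linarith) (by linarith)
      hr.le
      (by nlinarith [sub_sq_mul_one_sub_le x y ht₁.le])
      (by nlinarith [add_sq_mul_one_add_le x y ht₂.le, sq_nonneg (x + y)])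
    linarith
  · have key := mul_abs_add_sq_le (a := 1 + t) (x := x) (y := y) (by linarith) (by linarith)
      hr.le
      (by nlinarith [add_sq_mul_one_add_le x y ht₂.le])
      (by nlinarith [sub_sq_mul_one_sub_le x y ht₁.le, sq_nonneg (x - y)])
    linarith

lemma abs_div_sqrt_mul_one_add_le {t : ℝ} (x y : ℝ) (ht : |t| ≤ 1) :
    |(x + y) / √(x ^ 2 + y ^ 2 + 2 * x * y * t)| * (1 + t) ≤ 2 := by
  obtain ⟨ht₁, ht₂⟩ := abs_le.1 ht
  have hE := add_sq_mul_one_add_le x y ht₂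
  have hE0 : 0 ≤ x ^ 2 + y ^ 2 + 2 * x * y * t := by nlinarith [sq_nonneg (x + y)]
  rw [← abs_of_nonneg (show 0 ≤ 1 + t by linarith), ← abs_mul]
  refine abs_le_of_sq_le_sq ?_ zero_le_two
  rw [mul_pow, div_pow, sq_sqrt hE0, div_mul_eq_mul_div]
  refine div_le_of_le_mul₀ hE0 (by norm_num) ?_
  nlinarith [sq_nonneg (x + y)]

lemma norm_tauK_integrand_le {κ x y r t a b : ℝ} (hκ : 0 < κ) (ht : t ∈ Ioo (-1) 1)
    (ha : |a| = √(x ^ 2 + y ^ 2 + 2 * x * y * t))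
    (hb : |b| ≤ 1 + |(x + y) / √(x ^ 2 + y ^ 2 + 2 * x * y * t)|) :
    ‖(Icc (-r) r).indicator 1 a * b * (Mconst κ * (1 + t) * (1 - t ^ 2) ^ (κ - 1))‖ ≤
      4 * Mconst κ * {t : ℝ | x ^ 2 + y ^ 2 + 2 * x * y * t ≤ r ^ 2}.indicator
        (fun t => (1 - t ^ 2) ^ (κ - 1)) t := by
  have ht' : |t| < 1 := abs_lt.2 ht
  have hw : 0 ≤ (1 - t ^ 2) ^ (κ - 1) := rpow_nonneg (by nlinarith [sq_abs t, abs_nonneg t]) _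
  have hM := (Mconst_pos hκ).le
  by_cases hE : x ^ 2 + y ^ 2 + 2 * x * y * t ≤ r ^ 2
  · have hind : |(Icc (-r) r).indicator (1 : ℝ → ℝ) a| ≤ 1 := by
      rw [indicator_apply]; split_ifs <;> simp
    have h1t : 0 ≤ 1 + t := by linarith [ht.1]
    have hb' : |b| * (1 + t) ≤ 4 := by
      nlinarith [abs_div_sqrt_mul_one_add_le x y ht'.le, mul_le_mul_of_nonneg_right hb h1t, ht.2]
    rw [indicator_of_mem (show t ∈ {t : ℝ | x ^ 2 + y ^ 2 + 2 * x * y * t ≤ r ^ 2} from hE),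
      Real.norm_eq_abs, abs_mul, abs_mul,
      abs_of_nonneg (show 0 ≤ Mconst κ * (1 + t) * (1 - t ^ 2) ^ (κ - 1) by positivity)]
    calc _ = |(Icc (-r) r).indicator 1 a| * (|b| * (1 + t)) *
            (Mconst κ * (1 - t ^ 2) ^ (κ - 1)) := by ring
      _ ≤ 1 * 4 * (Mconst κ * (1 - t ^ 2) ^ (κ - 1)) := by gcongr
      _ = _ := by ring
  · have ha' : a ∉ Icc (-r) r := fun hmem =>
      hE (Real.sqrt_le_iff.1 (ha ▸ abs_le.2 hmem)).2
    rw [indicator_of_notMem ha', indicator_of_notMem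
      (show t ∉ {t : ℝ | x ^ 2 + y ^ 2 + 2 * x * y * t ≤ r ^ 2} from hE)]
    simp

lemma lintegral_Ioc_zero_rpow {p b : ℝ} (hp : -1 < p) (hb : 0 ≤ b) :
    ∫⁻ u in Ioc 0 b, ENNReal.ofReal (u ^ p) = ENNReal.ofReal (b ^ (p + 1) / (p + 1)) := by
  have hint : IntegrableOn (fun u : ℝ => u ^ p) (Ioc 0 b) :=
    (intervalIntegrable_iff_integrableOn_Ioc_of_le hb).1
      (intervalIntegral.intervalIntegrable_rpow' hp)
  rw [← ofReal_integral_eq_lintegral_ofReal hint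
      ((ae_restrict_iff' measurableSet_Ioc).2 (.of_forall fun u hu => rpow_nonneg hu.1.le p)),
    ← intervalIntegral.integral_of_le hb, integral_rpow (Or.inl hp),
    zero_rpow (by linarith), sub_zero]

lemma lintegral_Ioo_indicator_rpow_one_sub_abs_le {p δ : ℝ} (hp : -1 < p) (hδ : 0 ≤ δ) :
    ∫⁻ t in Ioo (-1) 1, {t : ℝ | 1 - |t| ≤ δ}.indicator
        (fun t => ENNReal.ofReal ((1 - |t|) ^ p)) t ≤
      2 * ENNReal.ofReal (δ ^ (p + 1) / (p + 1)) := by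
  set g : ℝ → ℝ≥0∞ := (Ioc 0 δ).indicator fun u => ENNReal.ofReal (u ^ p)
  have hg : Measurable g := by
    refine Measurable.indicator ?_ measurableSet_Ioc
    fun_prop
  have hpt : ∀ t ∈ Ioo (-1 : ℝ) 1, {t : ℝ | 1 - |t| ≤ δ}.indicator
      (fun t => ENNReal.ofReal ((1 - |t|) ^ p)) t ≤ g (1 + t) + g (1 - t) := by
    intro t ht
    -- `1 - |t|` is `1 + t` or `1 - t`, and `t ↦ 1 ± t` preserves Lebesgue measure
    by_cases htδ : 1 - |t| ≤ δ
    · have hmem : 1 - |t| ∈ Ioc 0 δ := ⟨by linarith [abs_lt.2 ht], htδ⟩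
      rw [indicator_of_mem (show t ∈ {t : ℝ | 1 - |t| ≤ δ} from htδ)]
      rcases abs_cases t with ⟨h, -⟩ | ⟨h, -⟩
      · rw [h] at hmem ⊢
        exact le_add_left (indicator_of_mem hmem fun u => ENNReal.ofReal (u ^ p)).ge
      · rw [h, sub_neg_eq_add] at hmem ⊢
        exact le_add_right (indicator_of_mem hmem fun u => ENNReal.ofReal (u ^ p)).ge
    · rw [indicator_of_notMem (show t ∉ {t : ℝ | 1 - |t| ≤ δ} from htδ)]
      exact zero_le
  calc _ ≤ ∫⁻ t in Ioo (-1) 1, g (1 + t) + g (1 - t) := setLIntegral_mono' measurableSet_Ioo hpt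
    _ ≤ ∫⁻ t, g (1 + t) + g (1 - t) := setLIntegral_le_lintegral _ _
    _ = 2 * ∫⁻ u, g u := by
      rw [lintegral_add_left (f := fun t => g (1 + t)) (hg.comp (measurable_const_add 1)),
        lintegral_add_left_eq_self, lintegral_sub_left_eq_self, two_mul]
    _ = 2 * ENNReal.ofReal (δ ^ (p + 1) / (p + 1)) := by
      rw [lintegral_indicator measurableSet_Ioc, lintegral_Ioc_zero_rpow hp hδ]

lemma rpow_le_max_one_two_rpow {w e : ℝ} (h1 : 1 ≤ w) (h2 : w ≤ 2) :
    w ^ e ≤ max 1 ((2 : ℝ) ^ e) := by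
  rcases le_or_gt 0 e with he | he
  · exact le_max_of_le_right (rpow_le_rpow (by linarith) h2 he)
  · exact le_max_of_le_left (rpow_le_one_of_one_le_of_nonpos h1 he.le)

lemma one_sub_sq_rpow_le {t : ℝ} (ht : |t| < 1) (e : ℝ) :
    (1 - t ^ 2) ^ e ≤ max 1 ((2 : ℝ) ^ e) * (1 - |t|) ^ e := by
  have hfac : 1 - t ^ 2 = (1 + |t|) * (1 - |t|) := by rw [← sq_abs]; ring
  rw [hfac, mul_rpow (by positivity) (by linarith)]
  exact mul_le_mul_of_nonneg_right
    (rpow_le_max_one_two_rpow (by linarith [abs_nonneg t]) (by linarith))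
    (rpow_nonneg (by linarith) _)

lemma lintegral_indicator_one_sub_sq_rpow_le {κ x y r : ℝ} (hκ : 0 < κ) (hr : 0 < r) :
    ∫⁻ t in Ioo (-1) 1, ENNReal.ofReal ({t : ℝ | x ^ 2 + y ^ 2 + 2 * x * y * t ≤ r ^ 2}.indicator
        (fun t => (1 - t ^ 2) ^ (κ - 1)) t) ≤
      ENNReal.ofReal (2 * max 1 ((2 : ℝ) ^ (κ - 1)) * (3 * r / (|x| + r)) ^ (2 * κ) / κ) := by
  set c := max 1 ((2 : ℝ) ^ (κ - 1))
  set δ := (3 * r / (|x| + r)) ^ 2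
  have hpt : ∀ t ∈ Ioo (-1 : ℝ) 1,
      ENNReal.ofReal ({t : ℝ | x ^ 2 + y ^ 2 + 2 * x * y * t ≤ r ^ 2}.indicator
        (fun t => (1 - t ^ 2) ^ (κ - 1)) t) ≤
      ENNReal.ofReal c * {t : ℝ | 1 - |t| ≤ δ}.indicator
        (fun t => ENNReal.ofReal ((1 - |t|) ^ (κ - 1))) t := by
    intro t ht
    have ht' : |t| < 1 := abs_lt.2 ht
    by_cases hE : x ^ 2 + y ^ 2 + 2 * x * y * t ≤ r ^ 2
    · rw [indicator_of_mem (show t ∈ {t : ℝ | x ^ 2 + y ^ 2 + 2 * x * y * t ≤ r ^ 2} from hE),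
        indicator_of_mem (show t ∈ {t : ℝ | 1 - |t| ≤ δ} from
          one_sub_abs_le_of_sq_add_sq_add_le hr ht' hE),
        ← ENNReal.ofReal_mul (by positivity)]
      exact ENNReal.ofReal_le_ofReal (one_sub_sq_rpow_le ht' _)
    · rw [indicator_of_notMem
        (show t ∉ {t : ℝ | x ^ 2 + y ^ 2 + 2 * x * y * t ≤ r ^ 2} from hE), ENNReal.ofReal_zero]
      exact zero_le
  have hδκ : δ ^ (κ - 1 + 1) = (3 * r / (|x| + r)) ^ (2 * κ) := by
    rw [sub_add_cancel, ← rpow_natCast_mul (by positivity)]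
    norm_num
  calc _ ≤ ∫⁻ t in Ioo (-1) 1, ENNReal.ofReal c * {t : ℝ | 1 - |t| ≤ δ}.indicator
        (fun t => ENNReal.ofReal ((1 - |t|) ^ (κ - 1))) t :=
        setLIntegral_mono' measurableSet_Ioo hpt
    _ ≤ ENNReal.ofReal c * (2 * ENNReal.ofReal (δ ^ (κ - 1 + 1) / (κ - 1 + 1))) := by
        rw [lintegral_const_mul' _ _ ENNReal.ofReal_ne_top]
        gcongr
        exact lintegral_Ioo_indicator_rpow_one_sub_abs_le (by linarith) (by positivity)
    _ = _ := by
        rw [hδκ, sub_add_cancel, ← ENNReal.ofReal_ofNat 2, ← ENNReal.ofReal_mul (by norm_num),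
          ← ENNReal.ofReal_mul (by positivity)]
        ring_nf

lemma norm_setIntegral_le_of_lintegral_le {α E : Type*} [MeasurableSpace α]
    [NormedAddCommGroup E] [NormedSpace ℝ E] {μ : Measure α} {s : Set α} (hs : MeasurableSet s)
    {g : α → E} {h : α → ℝ} {K : ℝ} (hK : 0 ≤ K) (hgh : ∀ t ∈ s, ‖g t‖ ≤ h t)
    (hh : ∫⁻ t in s, ENNReal.ofReal (h t) ∂μ ≤ ENNReal.ofReal K) :
    ‖∫ t in s, g t ∂μ‖ ≤ K :=
  (norm_integral_le_lintegral_norm g).trans <| ENNReal.toReal_le_of_le_ofReal hK <|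
    (setLIntegral_mono' hs fun t ht => ENNReal.ofReal_le_ofReal (hgh t ht)).trans hh

lemma abs_tauK_indicator_Icc_le {κ r : ℝ} (hκ : 0 < κ) (hr : 0 < r) (x y : ℝ) :
    |tauK κ x ((Icc (-r) r).indicator 1) y| ≤
      8 * Mconst κ * max 1 ((2 : ℝ) ^ (κ - 1)) / κ * (3 * r / (|x| + r)) ^ (2 * κ) := by
  set K := 2 * max 1 ((2 : ℝ) ^ (κ - 1)) * (3 * r / (|x| + r)) ^ (2 * κ) / κ
  have hM := Mconst_pos hκ
  have hbound : ∫⁻ t in Ioo (-1) 1, ENNReal.ofReal (4 * Mconst κ *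
      {t : ℝ | x ^ 2 + y ^ 2 + 2 * x * y * t ≤ r ^ 2}.indicator (fun t => (1 - t ^ 2) ^ (κ - 1)) t)
      ≤ ENNReal.ofReal (4 * Mconst κ * K) := by
    simp_rw [ENNReal.ofReal_mul (by positivity : 0 ≤ 4 * Mconst κ)]
    rw [lintegral_const_mul' _ _ ENNReal.ofReal_ne_top]
    gcongr
    exact lintegral_indicator_one_sub_sq_rpow_le hκ hr
  rw [tauK]
  calc _ ≤ 1 / 2 * (4 * Mconst κ * K) + 1 / 2 * (4 * Mconst κ * K) := by
        refine (abs_add_le _ _).trans (add_le_add ?_ ?_) <;>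
          rw [abs_mul, abs_of_pos one_half_pos, ← Real.norm_eq_abs] <;> gcongr
        · exact norm_setIntegral_le_of_lintegral_le measurableSet_Ioo (by positivity)
            (fun t ht => norm_tauK_integrand_le hκ ht (abs_of_nonneg (sqrt_nonneg _))
              ((abs_add_le _ _).trans_eq (by rw [abs_one]))) hbound
        · exact norm_setIntegral_le_of_lintegral_le measurableSet_Ioo (by positivity)
            (fun t ht => norm_tauK_integrand_le hκ ht
              ((abs_neg _).trans (abs_of_nonneg (sqrt_nonneg _)))
              ((abs_sub _ _).trans_eq (by rw [abs_one]))) hbound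
    _ = _ := by ring

lemma ofReal_rpow_mul_le_muK1_Ioo {κ a : ℝ} (hκ : 0 ≤ κ) (ha : 0 ≤ a) (b : ℝ) :
    ENNReal.ofReal (a ^ (2 * κ) * (b - a)) ≤ muK1 κ (Ioo a b) := by
  rw [muK1, withDensity_apply _ measurableSet_Ioo, ENNReal.ofReal_mul (by positivity),
    ← Real.volume_Ioo, ← setLIntegral_const]
  refine setLIntegral_mono' measurableSet_Ioo fun z hz => ENNReal.ofReal_le_ofReal ?_
  rw [abs_of_pos (ha.trans_lt hz.1)]
  exact rpow_le_rpow ha hz.1.le (by positivity)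

lemma muK1_le_of_abs_le {κ R : ℝ} (hκ : 0 ≤ κ) {s : Set ℝ} (hs : MeasurableSet s)
    (hR : ∀ z ∈ s, |z| ≤ R) : muK1 κ s ≤ ENNReal.ofReal (R ^ (2 * κ)) * volume s := by
  rw [muK1, withDensity_apply _ hs, ← setLIntegral_const]
  exact setLIntegral_mono' hs fun z hz =>
    ENNReal.ofReal_le_ofReal (rpow_le_rpow (abs_nonneg z) (hR z hz) (by positivity))

lemma rpow_le_muK1_Ioo_div_muK1_Iset {κ r : ℝ} (hκ : 0 < κ) (hr : 0 < r) (x : ℝ) :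
    (r / (|x| + r)) ^ (2 * κ) ≤
      4 * 2 ^ (2 * κ) * ((muK1 κ (Ioo (-r) r)).toReal / (muK1 κ (Iset x r)).toReal) := by
  have hnum_fin : muK1 κ (Ioo (-r) r) ≠ ⊤ :=
    (muK1_le_of_abs_le hκ.le measurableSet_Ioo fun z hz => abs_le.2 ⟨hz.1.le, hz.2.le⟩).trans_lt
      (ENNReal.mul_lt_top ENNReal.ofReal_lt_top measure_Ioo_lt_top) |>.ne
  have hden_le : muK1 κ (Iset x r) ≤ ENNReal.ofReal ((|x| + r) ^ (2 * κ) * (2 * r)) := by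
    refine (muK1_le_of_abs_le (R := |x| + r) hκ.le measurableSet_Ico fun z hz => ?_).trans ?_
    · rw [abs_of_nonneg ((le_max_left _ _).trans hz.1)]; exact hz.2.le
    · rw [Real.volume_Ico, ENNReal.ofReal_mul (by positivity)]
      gcongr
      linarith [le_max_right 0 (|x| - r)]
  have hnum : (r / 2) ^ (2 * κ) * (r / 2) ≤ (muK1 κ (Ioo (-r) r)).toReal := by
    refine (ENNReal.ofReal_le_iff_le_toReal hnum_fin).1 ?_
    calc _ = ENNReal.ofReal ((r / 2) ^ (2 * κ) * (r - r / 2)) := by ring_nf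
      _ ≤ _ := (ofReal_rpow_mul_le_muK1_Ioo hκ.le (by positivity) r).trans
          (measure_mono (Ioo_subset_Ioo (by linarith) le_rfl))
  have hden_pos : 0 < (muK1 κ (Iset x r)).toReal := by
    refine ENNReal.toReal_pos (ne_of_gt ?_) (ne_top_of_le_ne_top ENNReal.ofReal_ne_top hden_le)
    calc (0 : ℝ≥0∞) < ENNReal.ofReal ((|x| + r / 2) ^ (2 * κ) * (|x| + r - (|x| + r / 2))) := by
          rw [ENNReal.ofReal_pos]; ring_nf; positivity
      _ ≤ _ := (ofReal_rpow_mul_le_muK1_Ioo hκ.le (by positivity) _).trans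
          (measure_mono fun z hz => show z ∈ Ico _ _ from
            ⟨(max_le (by positivity) (by linarith)).trans hz.1.le, hz.2⟩)
  have hden : (muK1 κ (Iset x r)).toReal ≤ (|x| + r) ^ (2 * κ) * (2 * r) :=
    ENNReal.toReal_le_of_le_ofReal (by positivity) hden_le
  calc (r / (|x| + r)) ^ (2 * κ)
      = 4 * 2 ^ (2 * κ) * ((r / 2) ^ (2 * κ) * (r / 2) / ((|x| + r) ^ (2 * κ) * (2 * r))) := by
        rw [div_rpow hr.le (by positivity), div_rpow hr.le (by positivity)]
        field_simp
        ring
    _ ≤ _ := by gcongr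

/-- Abdelkefi–Sifi's sharp estimate for the Dunkl translate of an indicator. -/
theorem dunkl_translate_indicator_bound (κ : ℝ) (hκ : 0 < κ) :
    ∃ C : ℝ, 0 < C ∧ ∀ (x y r : ℝ), 0 < r →
      |tauK κ x ((Set.Icc (-r) r).indicator 1) y| ≤
        C * (muK1 κ (Set.Ioo (-r) r)).toReal / (muK1 κ (Iset x r)).toReal := by
  have hM := Mconst_pos hκ
  set A := 8 * Mconst κ * max 1 ((2 : ℝ) ^ (κ - 1)) / κ
  refine ⟨A * 3 ^ (2 * κ) * (4 * 2 ^ (2 * κ)), by positivity, fun x y r hr => ?_⟩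
  calc _ ≤ A * (3 * r / (|x| + r)) ^ (2 * κ) := abs_tauK_indicator_Icc_le hκ hr x y
    _ = A * 3 ^ (2 * κ) * (r / (|x| + r)) ^ (2 * κ) := by
        rw [mul_div_assoc, mul_rpow (by norm_num) (by positivity), mul_assoc]
    _ ≤ A * 3 ^ (2 * κ) * (4 * 2 ^ (2 * κ) *
          ((muK1 κ (Ioo (-r) r)).toReal / (muK1 κ (Iset x r)).toReal)) := by
        gcongr
        exact rpow_le_muK1_Ioo_div_muK1_Iset hκ hr x
    _ = _ := by ring
end
end

section
/- For all x, y ∈ ℝ∖{0} and every r > 0, the Dunkl translate of the indicator of [−r,r] is nonnegative: τ_x^κ(χ_{[−r,r]})(y) ≥ 0. -/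
noncomputable section
open MeasureTheory Set Real
open scoped ENNReal NNReal

/-!
For an even `f` the two halves of Rösler's formula differ only in the sign of the odd part
`f(√·) (x+y)/√·`, so that part cancels and `τ_x^κ f(y)` reduces to
`∫ f(√(x²+y²+2xyt)) Φ_κ(t) dt`, which is nonnegative when `f` is.
-/

/-- The density `Φ_κ(t) = M_κ (1+t)(1-t²)^(κ-1)` of Rösler's formula. -/
def roslerWeight (κ t : ℝ) : ℝ := Mconst κ * (1 + t) * (1 - t ^ 2) ^ (κ - 1)

lemma roslerWeight_nonneg {κ t : ℝ} (hκ : 0 < κ) (ht : t ∈ Ioo (-1 : ℝ) 1) :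
    0 ≤ roslerWeight κ t := by
  have h1 : 0 ≤ 1 + t := by linarith [ht.1]
  have h2 : 0 ≤ 1 - t ^ 2 := by nlinarith [ht.1, ht.2]
  exact mul_nonneg (mul_nonneg (Mconst_pos hκ).le h1) (rpow_nonneg h2 _)

lemma roslerWeight_le {κ t : ℝ} (hκ : 0 < κ) (ht : t ∈ Ioo (-1 : ℝ) 1) :
    roslerWeight κ t ≤ Mconst κ * 2 ^ κ * (1 - t) ^ (κ - 1) := by
  have h1 : 0 < 1 + t := by linarith [ht.1]
  have h2 : 0 < 1 - t := by linarith [ht.2]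
  have hfactor : roslerWeight κ t = Mconst κ * ((1 + t) ^ κ * (1 - t) ^ (κ - 1)) := by
    rw [roslerWeight, show (1 : ℝ) - t ^ 2 = (1 + t) * (1 - t) by ring,
      mul_rpow h1.le h2.le, rpow_sub_one h1.ne' κ]
    field_simp
  have hM := (Mconst_pos hκ).le
  rw [hfactor, mul_assoc]
  gcongr
  linarith [ht.2]

lemma integrableOn_roslerWeight {κ : ℝ} (hκ : 0 < κ) :
    IntegrableOn (roslerWeight κ) (Ioo (-1 : ℝ) 1) := by
  have hbound :
      IntegrableOn (fun t => Mconst κ * 2 ^ κ * (1 - t) ^ (κ - 1)) (Ioo (-1 : ℝ) 1) := by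
    have h := ((intervalIntegral.intervalIntegrable_rpow' (a := 0) (b := 2)
      (r := κ - 1) (by linarith)).comp_sub_left 1).symm
    norm_num at h
    rw [intervalIntegrable_iff_integrableOn_Ioo_of_le (by norm_num)] at h
    exact h.const_mul _
  refine hbound.mono' ?_ ?_
  · refine ContinuousOn.aestronglyMeasurable ?_ measurableSet_Ioo
    refine ContinuousOn.mul (by fun_prop) (ContinuousOn.rpow_const (by fun_prop) fun t ht => ?_)
    left
    nlinarith [ht.1, ht.2]
  · refine (ae_restrict_iff' measurableSet_Ioo).2 (Filter.Eventually.of_forall fun t ht => ?_)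
    rw [Real.norm_eq_abs, abs_of_nonneg (roslerWeight_nonneg hκ ht)]
    exact roslerWeight_le hκ ht

/-- If `h` is not integrable, both integrals are the junk value `0`. -/
lemma integral_add_add_integral_sub_nonneg {α : Type*} [MeasurableSpace α] {μ : Measure α}
    {g h : α → ℝ} (hg : Integrable g μ) (hg_nonneg : 0 ≤ ∫ a, g a ∂μ) :
    0 ≤ ∫ a, (g a + h a) ∂μ + ∫ a, (g a - h a) ∂μ := by
  by_cases hh : Integrable h μ
  · rw [integral_add hg hh, integral_sub hg hh]
    linarith
  · have hadd : ¬ Integrable (fun a => g a + h a) μ := fun H =>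
      hh ((H.sub hg).congr (Filter.Eventually.of_forall fun a => by simp))
    have hsub : ¬ Integrable (fun a => g a - h a) μ := fun H =>
      hh ((hg.sub H).congr (Filter.Eventually.of_forall fun a => by simp))
    simp [integral_undef hadd, integral_undef hsub]

theorem tauK_nonneg_of_even {κ C : ℝ} (hκ : 0 < κ) {f : ℝ → ℝ} (hf_meas : Measurable f)
    (hf_nonneg : 0 ≤ f) (hf_le : ∀ s, f s ≤ C) (hf_even : f.Even) (x y : ℝ) :
    0 ≤ tauK κ x f y := by
  set F : ℝ → ℝ := fun t => f √(x ^ 2 + y ^ 2 + 2 * x * y * t)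
  set q : ℝ → ℝ := fun t => (x + y) / √(x ^ 2 + y ^ 2 + 2 * x * y * t)
  have hsplit : tauK κ x f y = (1 / 2) *
      ((∫ t in Ioo (-1 : ℝ) 1, (F t * roslerWeight κ t + F t * q t * roslerWeight κ t)) +
        ∫ t in Ioo (-1 : ℝ) 1, (F t * roslerWeight κ t - F t * q t * roslerWeight κ t)) := by
    simp only [tauK, hf_even _, F, q, roslerWeight, ← mul_add]
    congr 3 <;> funext t <;> ring
  have hF_int : IntegrableOn (fun t => F t * roslerWeight κ t) (Ioo (-1 : ℝ) 1) :=
    (integrableOn_roslerWeight hκ).bdd_mul (c := C) (by fun_prop)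
      (Filter.Eventually.of_forall fun t => by
        rw [Real.norm_eq_abs, abs_of_nonneg (hf_nonneg _)]; exact hf_le _)
  rw [hsplit]
  exact mul_nonneg one_half_pos.le <| integral_add_add_integral_sub_nonneg hF_int <|
    setIntegral_nonneg measurableSet_Ioo fun t ht =>
      mul_nonneg (hf_nonneg _) (roslerWeight_nonneg hκ ht)

/-- Positivity of the Dunkl translate of the indicator of `[-r,r]`. -/
theorem dunkl_translate_indicator_nonneg (κ : ℝ) (hκ : 0 < κ) :
    ∀ x y : ℝ, x ≠ 0 → y ≠ 0 → ∀ r : ℝ, 0 < r →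
      0 ≤ tauK κ x ((Set.Icc (-r) r).indicator 1) y := by
  intro x y _ _ r _
  have hone : ∀ s : ℝ, (0 : ℝ) ≤ (1 : ℝ → ℝ) s := fun _ => zero_le_one
  refine tauK_nonneg_of_even hκ (measurable_one.indicator measurableSet_Icc)
    (indicator_nonneg fun s _ => hone s) (indicator_le_self' fun s _ => hone s) (fun s => ?_) x y
  simp only [indicator, mem_Icc, neg_le_neg_iff, neg_le, Pi.one_apply, and_comm]
end
end

section
/- There exists a constant C > 0, depending only on κ_1,…,κ_d, with the following property: if E is a μ_κ-measurable subset of ℝ_+×⋯×ℝ_+ and E ⊂ ⋃_{j∈J} R_j where each R_j = R(z_j, r_j) with z_j ∈ ℝ^d and r_j > 0, and sup_{j∈J} r_j < ∞, then one can select from this family a finite or countable pairwise disjoint subfamily R_1, …, R_n, … such that μ_κ(E) ≤ C Σ_n μ_κ(R_n). -/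
/-!
Vitali's covering argument (with enlargement factor 2) selects a disjoint subfamily, countable
because the rectangles have nonempty interior, such that every rectangle of the family meets a
selected one of at least half its radius and hence lies in that one's fivefold enlargement. It then
suffices that `μ_κ` is doubling on rectangles, `μ_κ(R(z, 5r)) ≤ C μ_κ(R(z, r))`; as the weight is a
product, this is checked one side at a time.
-/

noncomputable section
open MeasureTheory Set Real
open scoped ENNReal NNReal

lemma interior_Rset_nonempty {d : ℕ} (z : Fin d → ℝ) {r : ℝ} (hr : 0 < r) :
    (interior (Rset d z r)).Nonempty := by
  rw [Rset, interior_pi_set finite_univ, univ_pi_nonempty_iff]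
  intro j
  rw [Iset, interior_Ico, nonempty_Ioo]
  exact max_lt (by positivity) (by linarith)

lemma Iset_subset_Iset_five_mul {x x' r r' : ℝ} (h : (Iset x r ∩ Iset x' r').Nonempty)
    (hle : r ≤ 2 * r') : Iset x r ⊆ Iset x' (5 * r') := by
  obtain ⟨s, ⟨hs, hs'⟩, ht, ht'⟩ := h
  intro p ⟨hp, hp'⟩
  rw [max_le_iff] at hs ht hp
  exact ⟨max_le hp.1 (by linarith), by linarith⟩

lemma Rset_subset_Rset_five_mul {d : ℕ} {z z' : Fin d → ℝ} {r r' : ℝ}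
    (h : (Rset d z r ∩ Rset d z' r').Nonempty) (hle : r ≤ 2 * r') :
    Rset d z r ⊆ Rset d z' (5 * r') := by
  obtain ⟨w, hw, hw'⟩ := h
  exact pi_mono fun j _ =>
    Iset_subset_Iset_five_mul ⟨w j, hw j (mem_univ j), hw' j (mem_univ j)⟩ hle

lemma exists_countable_disjoint_Rset_five_mul_cover {d : ℕ} {J : Type*} (z : J → Fin d → ℝ)
    (rad : J → ℝ) (hrad : ∀ j, 0 < rad j) (hbdd : BddAbove (range rad)) :
    ∃ s : Set J, s.Countable ∧ s.PairwiseDisjoint (fun j => Rset d (z j) (rad j)) ∧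
      ⋃ j, Rset d (z j) (rad j) ⊆ ⋃ b ∈ s, Rset d (z b) (5 * rad b) := by
  obtain ⟨R, hR⟩ := hbdd
  obtain ⟨s, -, hdisj, hcover⟩ := Vitali.exists_disjoint_subfamily_covering_enlargement
    (fun j => Rset d (z j) (rad j)) univ rad 2 one_lt_two (fun j _ => (hrad j).le) R
    (fun j _ => hR (mem_range_self j))
    (fun j _ => (interior_Rset_nonempty (z j) (hrad j)).mono interior_subset)
  refine ⟨s, hdisj.countable_of_nonempty_interior fun j _ => interior_Rset_nonempty _ (hrad j),
    hdisj, iUnion_subset fun j => ?_⟩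
  obtain ⟨b, hb, hinter, hle⟩ := hcover j (mem_univ j)
  exact fun x hx => mem_biUnion hb (Rset_subset_Rset_five_mul hinter hle hx)

section muK

variable {d : ℕ} {κ : Fin d → ℝ} {a b : Fin d → ℝ}

lemma muK_pi_Ico_le {u : Fin d → ℝ} (hu0 : ∀ j, 0 ≤ u j)
    (hu : ∀ j, ∀ t ∈ Ico (a j) (b j), |t| ^ (2 * κ j) ≤ u j) :
    muK d κ (univ.pi fun j => Ico (a j) (b j)) ≤ ∏ j, ENNReal.ofReal (u j * (b j - a j)) := by
  have hs : MeasurableSet (univ.pi fun j => Ico (a j) (b j)) :=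
    .univ_pi fun _ => measurableSet_Ico
  rw [muK, withDensity_apply _ hs]
  calc ∫⁻ x in univ.pi fun j => Ico (a j) (b j), ENNReal.ofReal (∏ j, |x j| ^ (2 * κ j))
      ≤ ∫⁻ _ in univ.pi fun j => Ico (a j) (b j), ENNReal.ofReal (∏ j, u j) := by
        refine setLIntegral_mono' hs fun x hx => ENNReal.ofReal_le_ofReal ?_
        exact Finset.prod_le_prod (fun j _ => by positivity) fun j _ => hu j _ (hx j (mem_univ j))
    _ = ∏ j, ENNReal.ofReal (u j * (b j - a j)) := by
        rw [setLIntegral_const, volume_pi_pi, ENNReal.ofReal_prod_of_nonneg fun j _ => hu0 j,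
          ← Finset.prod_mul_distrib]
        simp only [Real.volume_Ico, ENNReal.ofReal_mul (hu0 _)]

lemma le_muK_pi_Ico {l : Fin d → ℝ} (hl0 : ∀ j, 0 ≤ l j)
    (hl : ∀ j, ∀ t ∈ Ico (a j) (b j), l j ≤ |t| ^ (2 * κ j)) :
    ∏ j, ENNReal.ofReal (l j * (b j - a j)) ≤ muK d κ (univ.pi fun j => Ico (a j) (b j)) := by
  have hs : MeasurableSet (univ.pi fun j => Ico (a j) (b j)) :=
    .univ_pi fun _ => measurableSet_Ico
  rw [muK, withDensity_apply _ hs]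
  calc ∏ j, ENNReal.ofReal (l j * (b j - a j))
      = ∫⁻ _ in univ.pi fun j => Ico (a j) (b j), ENNReal.ofReal (∏ j, l j) := by
        rw [setLIntegral_const, volume_pi_pi, ENNReal.ofReal_prod_of_nonneg fun j _ => hl0 j,
          ← Finset.prod_mul_distrib]
        simp only [Real.volume_Ico, ENNReal.ofReal_mul (hl0 _)]
    _ ≤ ∫⁻ x in univ.pi fun j => Ico (a j) (b j), ENNReal.ofReal (∏ j, |x j| ^ (2 * κ j)) := by
        refine setLIntegral_mono' hs fun x hx => ENNReal.ofReal_le_ofReal ?_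
        exact Finset.prod_le_prod (fun j _ => hl0 j) fun j _ => hl j _ (hx j (mem_univ j))

/-- On the `j`-th side of `R(z, 5r)` the weight is at most `(5(|z_j| + r))^{2κ_j}`; on the top half
`[|z_j| + r/2, |z_j| + r)` of the `j`-th side of `R(z, r)` it is at least `((|z_j| + r)/2)^{2κ_j}`,
smaller by the factor `10^{2κ_j}`, and the side lengths differ by the factor `20`. -/
lemma muK_Rset_five_mul_le (hκ : ∀ j, 0 ≤ κ j) (z : Fin d → ℝ) {r : ℝ} (hr : 0 < r) :
    muK d κ (Rset d z (5 * r)) ≤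
      ENNReal.ofReal (∏ j, 20 * (10 : ℝ) ^ (2 * κ j)) * muK d κ (Rset d z r) := by
  set U : Fin d → ℝ := fun j => (5 * (|z j| + r)) ^ (2 * κ j)
  set L : Fin d → ℝ := fun j => ((|z j| + r) / 2) ^ (2 * κ j)
  have hU : ∀ j, U j = 10 ^ (2 * κ j) * L j := fun j => by
    simp only [U, L]
    rw [← Real.mul_rpow (by norm_num) (by positivity)]
    ring_nf
  have hside : ∀ j, U j * (|z j| + 5 * r - max 0 (|z j| - 5 * r)) ≤
      20 * 10 ^ (2 * κ j) * (L j * (|z j| + r - (|z j| + r / 2))) := fun j => by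
    have hL : 0 ≤ 10 ^ (2 * κ j) * L j := by positivity
    have hlen : |z j| + 5 * r - max 0 (|z j| - 5 * r) ≤ 10 * r := by
      linarith [le_max_right 0 (|z j| - 5 * r)]
    rw [hU]
    nlinarith
  calc muK d κ (Rset d z (5 * r))
      ≤ ∏ j, ENNReal.ofReal (U j * (|z j| + 5 * r - max 0 (|z j| - 5 * r))) := by
        refine muK_pi_Ico_le (fun j => by positivity) fun j t ht => ?_
        have ht0 : 0 ≤ t := (le_max_left _ _).trans ht.1
        refine Real.rpow_le_rpow (abs_nonneg t) ?_ (by linarith [hκ j])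
        rw [abs_of_nonneg ht0]
        linarith [ht.2, abs_nonneg (z j)]
    _ ≤ ∏ j, ENNReal.ofReal (20 * 10 ^ (2 * κ j)) *
          ENNReal.ofReal (L j * (|z j| + r - (|z j| + r / 2))) := by
        refine Finset.prod_le_prod' fun j _ => ?_
        rw [← ENNReal.ofReal_mul (by positivity)]
        exact ENNReal.ofReal_le_ofReal (hside j)
    _ ≤ ENNReal.ofReal (∏ j, 20 * (10 : ℝ) ^ (2 * κ j)) *
          muK d κ (univ.pi fun j => Ico (|z j| + r / 2) (|z j| + r)) := by
        rw [Finset.prod_mul_distrib, ENNReal.ofReal_prod_of_nonneg fun j _ => by positivity]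
        refine mul_le_mul_right (le_muK_pi_Ico (fun j => by positivity) fun j t ht => ?_) _
        refine Real.rpow_le_rpow (by positivity) ?_ (by linarith [hκ j])
        linarith [ht.1, le_abs_self t, abs_nonneg (z j)]
    _ ≤ ENNReal.ofReal (∏ j, 20 * (10 : ℝ) ^ (2 * κ j)) * muK d κ (Rset d z r) := by
        refine mul_le_mul_right (measure_mono (pi_mono fun j _ => Ico_subset_Ico ?_ le_rfl)) _
        exact max_le (by positivity) (by linarith)

end muK

theorem covering_lemma_Rset_general
    (d : ℕ) (κ : Fin d → ℝ) (hκ : ∀ j, 0 ≤ κ j) :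
    ∃ C : ℝ, 0 < C ∧ ∀ (J : Type) (z : J → Fin d → ℝ) (rad : J → ℝ),
      (∀ j, 0 < rad j) → BddAbove (Set.range rad) →
      ∀ E : Set (Fin d → ℝ), MeasurableSet E → E ⊆ {x | ∀ j, 0 ≤ x j} →
        E ⊆ ⋃ j, Rset d (z j) (rad j) →
        ∃ s : Set J, s.Countable ∧
          s.PairwiseDisjoint (fun j => Rset d (z j) (rad j)) ∧
          muK d κ E ≤ ENNReal.ofReal C * ∑' j : s, muK d κ (Rset d (z j) (rad j)) := by
  refine ⟨∏ j, 20 * (10 : ℝ) ^ (2 * κ j), Finset.prod_pos fun j _ => by positivity, ?_⟩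
  intro J z rad hrad hbdd E _ _ hE
  obtain ⟨s, hs, hdisj, hcover⟩ := exists_countable_disjoint_Rset_five_mul_cover z rad hrad hbdd
  refine ⟨s, hs, hdisj, ?_⟩
  calc muK d κ E ≤ muK d κ (⋃ b ∈ s, Rset d (z b) (5 * rad b)) := measure_mono (hE.trans hcover)
    _ ≤ ∑' b : s, muK d κ (Rset d (z b) (5 * rad b)) := measure_biUnion_le _ hs _
    _ ≤ ∑' b : s, ENNReal.ofReal (∏ j, 20 * (10 : ℝ) ^ (2 * κ j)) *
          muK d κ (Rset d (z b) (rad b)) :=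
        ENNReal.tsum_le_tsum fun b => muK_Rset_five_mul_le hκ _ (hrad b)
    _ = _ := ENNReal.tsum_mul_left

/-- Vitali-type covering lemma for the rectangles `R(z,r)` and the measure `μ_κ`. -/
theorem covering_lemma_Rset
    (d : ℕ) (hd : 1 ≤ d) (κ : Fin d → ℝ) (hκ : ∀ j, 0 ≤ κ j) :
    ∃ C : ℝ, 0 < C ∧ ∀ (J : Type) (z : J → Fin d → ℝ) (rad : J → ℝ),
      (∀ j, 0 < rad j) → BddAbove (Set.range rad) →
      ∀ E : Set (Fin d → ℝ), MeasurableSet E → E ⊆ {x | ∀ j, 0 ≤ x j} →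
        E ⊆ ⋃ j, Rset d (z j) (rad j) →
        ∃ s : Set J, s.Countable ∧
          s.PairwiseDisjoint (fun j => Rset d (z j) (rad j)) ∧
          muK d κ E ≤ ENNReal.ofReal C * ∑' j : s, muK d κ (Rset d (z j) (rad j)) :=
  covering_lemma_Rset_general d κ hκ
end
end

section
/- There exists a constant C > 0, depending only on κ_1,…,κ_d, such that for every f ∈ L^1(μ_κ) and every λ > 0, μ_κ({x ∈ ℝ^d : M_κ^R f(x) > λ}) ≤ (C/λ) ‖f‖_{κ,1}. -/
noncomputable section
open MeasureTheory Set Real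
open scoped ENNReal NNReal

/-!
`μ_κ` is the product of the one-dimensional measures `|t|^{2κ_j} dt`, which are invariant
under `t ↦ -t` and have densities increasing in `|t|`. Comparing the density with its values at
the ends of an interval gives the doubling bound `μ_κ {y : ỹ ∈ R(x,5r)} ≤ C μ_κ(R(x,r))`, and the
sets `{y : ỹ ∈ R(x,r)}` engulf one another like balls: if two of them meet and `r' ≤ 2r`, the one
of radius `r'` lies in the one of radius `5r`. The Vitali covering lemma then yields the weak type
`(1,1)` bound exactly as for the Hardy–Littlewood maximal function; the radii it has to handle
are bounded because `μ_κ(R(x,r)) ≥ r/2` for `r ≥ 2`.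
-/

theorem lintegral_fin_nat_prod_eq_prod {n : ℕ} {E : Type*} [MeasurableSpace E]
    {μ : Fin n → Measure E} [∀ i, SigmaFinite (μ i)] {f : Fin n → E → ℝ≥0∞}
    (hf : ∀ i, Measurable (f i)) :
    ∫⁻ x : Fin n → E, ∏ i, f i (x i) ∂(Measure.pi μ) = ∏ i, ∫⁻ x, f i x ∂(μ i) := by
  induction n with
  | zero => simp
  | succ n ih =>
      calc
        _ = ∫⁻ x : E × (Fin n → E), f 0 x.1 * ∏ i : Fin n, f i.succ (x.2 i)
            ∂((μ 0).prod (Measure.pi fun i ↦ μ i.succ)) := by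
          rw [← ((measurePreserving_piFinSuccAbove μ 0).symm).lintegral_comp_emb
            (MeasurableEquiv.measurableEmbedding _)]
          simp [MeasurableEquiv.piFinSuccAbove_symm_apply, Fin.prod_univ_succ]
        _ = ∏ i, ∫⁻ x, f i x ∂(μ i) := by
          have hg : Measurable fun y : Fin n → E ↦ ∏ i, f i.succ (y i) :=
            Finset.measurable_prod _ fun i _ ↦ (hf i.succ).comp (measurable_pi_apply i)
          rw [lintegral_prod_mul (hf 0).aemeasurable hg.aemeasurable, ih fun i ↦ hf i.succ,
            Fin.prod_univ_succ]

theorem ENNReal.le_div_of_lt_inv_mul {a b c : ℝ≥0∞} (ha : a ≠ 0) (hc : c ≠ ∞)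
    (h : a < b⁻¹ * c) : b ≤ c / a :=
  (ENNReal.le_div_iff_mul_le (Or.inl ha) (Or.inr hc)).2 <| mul_comm a b ▸
    (ENNReal.mul_lt_of_lt_div (by rwa [mul_comm, ← div_eq_mul_inv] at h)).le

section VitaliCovering

variable {α : Type*} [MeasurableSpace α] {μ : Measure α} {g : α → ℝ≥0∞}

theorem Set.PairwiseDisjoint.countable_of_setLIntegral_pos {ι : Type*} {u : Set ι}
    {s : ι → Set α} (hdisj : u.PairwiseDisjoint s) (hs : ∀ i ∈ u, MeasurableSet (s i))
    (hg : ∫⁻ y, g y ∂μ ≠ ∞) (hpos : ∀ i ∈ u, 0 < ∫⁻ y in s i, g y ∂μ) : u.Countable := by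
  have hfin : μ.withDensity g (⋃ i : u, s i) ≠ ∞ :=
    ne_top_of_le_ne_top (by rwa [withDensity_apply _ MeasurableSet.univ, Measure.restrict_univ])
      (measure_mono (subset_univ _))
  have key := Measure.countable_meas_pos_of_disjoint_of_meas_iUnion_ne_top (μ.withDensity g)
    (As := fun i : u ↦ s i) (fun i ↦ hs i i.2)
    (fun i j hij ↦ hdisj i.2 j.2 (Subtype.coe_injective.ne hij)) hfin
  rw [← Set.countable_coe_iff, ← Set.countable_univ_iff]
  convert key using 1
  ext i
  simp [withDensity_apply _ (hs i i.2), hpos i i.2]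

theorem measure_setOf_lt_maximal_le (B : α → ℝ → Set α) (V : α → ℝ → ℝ≥0∞) (C : ℝ≥0∞)
    (hB_meas : ∀ x r, MeasurableSet (B x r)) (hB_self : ∀ x r, 0 < r → x ∈ B x r)
    (hB_engulf : ∀ x x' r r', r' ≤ 2 * r → (B x r ∩ B x' r').Nonempty → B x' r' ⊆ B x (5 * r))
    (hB_doubling : ∀ x r, 0 < r → μ (B x (5 * r)) ≤ C * V x r)
    (hV_large : ∀ M ≠ ∞, ∃ R, ∀ x r, R < r → M < V x r)
    (hg : ∫⁻ y, g y ∂μ ≠ ∞) {L : ℝ≥0∞} (hL : L ≠ 0) :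
    μ {x | ∃ r > 0, L < (V x r)⁻¹ * ∫⁻ y in B x r, g y ∂μ} ≤ C / L * ∫⁻ y, g y ∂μ := by
  set E := {x | ∃ r > 0, L < (V x r)⁻¹ * ∫⁻ y in B x r, g y ∂μ}
  have hE : ∀ x ∈ E, ∃ r, 0 < r ∧ V x r ≤ (∫⁻ y in B x r, g y ∂μ) / L ∧
      0 < ∫⁻ y in B x r, g y ∂μ := by
    rintro x ⟨r, hr, hlt⟩
    refine ⟨r, hr, ENNReal.le_div_of_lt_inv_mul hL
      (ne_top_of_le_ne_top hg (setLIntegral_le_lintegral _ _)) hlt, pos_iff_ne_zero.2 fun h0 ↦ ?_⟩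
    simp [h0] at hlt
  choose! ρ hρ_pos hρ_le hρ_int using hE
  obtain ⟨R, hR⟩ := hV_large ((∫⁻ y, g y ∂μ) / L) (ENNReal.div_ne_top hg hL)
  have hρR : ∀ x ∈ E, ρ x ≤ R := fun x hx ↦ not_lt.1 fun h ↦ (hR x _ h).not_ge <|
    (hρ_le x hx).trans (by gcongr; exact Measure.restrict_le_self)
  obtain ⟨u, huE, hdisj, hcov⟩ := Vitali.exists_disjoint_subfamily_covering_enlargement
    (fun x ↦ B x (ρ x)) E ρ 2 one_lt_two (fun x hx ↦ (hρ_pos x hx).le) R hρR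
    (fun x hx ↦ ⟨x, hB_self x _ (hρ_pos x hx)⟩)
  have hu : u.Countable := hdisj.countable_of_setLIntegral_pos (fun x _ ↦ hB_meas _ _) hg
    fun x hx ↦ hρ_int x (huE hx)
  have hEu : E ⊆ ⋃ b ∈ u, B b (5 * ρ b) := fun x hx ↦ by
    obtain ⟨b, hbu, hne, hle⟩ := hcov x hx
    exact mem_biUnion hbu <| hB_engulf b x _ _ hle (inter_comm _ _ ▸ hne) <|
      hB_self x _ (hρ_pos x hx)
  calc μ E ≤ μ (⋃ b ∈ u, B b (5 * ρ b)) := measure_mono hEu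
    _ ≤ ∑' b : u, μ (B b (5 * ρ b)) := measure_biUnion_le μ hu _
    _ ≤ ∑' b : u, C / L * ∫⁻ y in B b (ρ b), g y ∂μ := by
      refine ENNReal.tsum_le_tsum fun b ↦ ?_
      calc μ (B b (5 * ρ b)) ≤ C * V b (ρ b) := hB_doubling _ _ (hρ_pos b (huE b.2))
        _ ≤ C * ((∫⁻ y in B b (ρ b), g y ∂μ) / L) := by gcongr; exact hρ_le b (huE b.2)
        _ = C / L * ∫⁻ y in B b (ρ b), g y ∂μ := by simp only [div_eq_mul_inv]; ring
    _ = C / L * ∫⁻ y in ⋃ b ∈ u, B b (ρ b), g y ∂μ := by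
      rw [ENNReal.tsum_mul_left, lintegral_biUnion hu (fun b _ ↦ hB_meas _ _) hdisj]
    _ ≤ C / L * ∫⁻ y, g y ∂μ := by gcongr; exact Measure.restrict_le_self

end VitaliCovering

section OneDimensional

variable {κ : ℝ}

theorem muK1_Ico_le (hκ : 0 ≤ κ) {p q : ℝ} (hp : 0 ≤ p) (hpq : p ≤ q) :
    muK1 κ (Ico p q) ≤ ENNReal.ofReal ((q - p) * q ^ (2 * κ)) :=
  calc muK1 κ (Ico p q) = ∫⁻ t in Ico p q, ENNReal.ofReal (|t| ^ (2 * κ)) :=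
        withDensity_apply' _ _
    _ ≤ ∫⁻ _ in Ico p q, ENNReal.ofReal (q ^ (2 * κ)) :=
        setLIntegral_mono' measurableSet_Ico fun t ht ↦ ENNReal.ofReal_le_ofReal <|
          Real.rpow_le_rpow (abs_nonneg t) (by rw [abs_of_nonneg (hp.trans ht.1)]; exact ht.2.le)
            (by linarith)
    _ = ENNReal.ofReal ((q - p) * q ^ (2 * κ)) := by
        rw [setLIntegral_const, Real.volume_Ico,
          ← ENNReal.ofReal_mul (Real.rpow_nonneg (hp.trans hpq) _), mul_comm]

theorem ofReal_le_muK1_Ico (hκ : 0 ≤ κ) {p q : ℝ} (hp : 0 ≤ p) :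
    ENNReal.ofReal ((q - p) * p ^ (2 * κ)) ≤ muK1 κ (Ico p q) :=
  calc ENNReal.ofReal ((q - p) * p ^ (2 * κ)) = ∫⁻ _ in Ico p q, ENNReal.ofReal (p ^ (2 * κ)) := by
        rw [setLIntegral_const, Real.volume_Ico, ← ENNReal.ofReal_mul (Real.rpow_nonneg hp _),
          mul_comm]
    _ ≤ ∫⁻ t in Ico p q, ENNReal.ofReal (|t| ^ (2 * κ)) :=
        setLIntegral_mono' measurableSet_Ico fun t ht ↦ ENNReal.ofReal_le_ofReal <|
          Real.rpow_le_rpow hp (ht.1.trans (le_abs_self t)) (by linarith)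
    _ = muK1 κ (Ico p q) := (withDensity_apply' _ _).symm

theorem muK1_Iset_le (hκ : 0 ≤ κ) (x : ℝ) {r : ℝ} (hr : 0 ≤ r) :
    muK1 κ (Iset x r) ≤ ENNReal.ofReal (2 * r * (|x| + r) ^ (2 * κ)) := by
  refine (muK1_Ico_le hκ (le_max_left _ _) (max_le (by positivity) (by linarith))).trans
    (ENNReal.ofReal_le_ofReal (mul_le_mul_of_nonneg_right ?_ (by positivity)))
  linarith [le_max_right 0 (|x| - r)]

theorem ofReal_le_muK1_Iset (hκ : 0 ≤ κ) (x : ℝ) {r : ℝ} (hr : 0 ≤ r) :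
    ENNReal.ofReal (r / 2 * (|x| + r / 2) ^ (2 * κ)) ≤ muK1 κ (Iset x r) :=
  calc ENNReal.ofReal (r / 2 * (|x| + r / 2) ^ (2 * κ))
      = ENNReal.ofReal ((|x| + r - (|x| + r / 2)) * (|x| + r / 2) ^ (2 * κ)) := by ring_nf
    _ ≤ muK1 κ (Ico (|x| + r / 2) (|x| + r)) := ofReal_le_muK1_Ico hκ (by positivity)
    _ ≤ muK1 κ (Iset x r) :=
        measure_mono (Ico_subset_Ico (max_le (by positivity) (by linarith)) le_rfl)

theorem muK1_preimage_neg (A : Set ℝ) : muK1 κ (Neg.neg ⁻¹' A) = muK1 κ A := by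
  rw [muK1, withDensity_apply', withDensity_apply',
    ← (Measure.measurePreserving_neg volume).setLIntegral_comp_preimage_emb
      (Homeomorph.neg ℝ).measurableEmbedding (fun t ↦ ENNReal.ofReal (|t| ^ (2 * κ))) A]
  simp only [abs_neg]

theorem muK1_preimage_abs_le (A : Set ℝ) : muK1 κ (abs ⁻¹' A) ≤ 2 * muK1 κ A :=
  calc muK1 κ (abs ⁻¹' A) ≤ muK1 κ (A ∪ Neg.neg ⁻¹' A) := measure_mono fun t (ht : |t| ∈ A) ↦
        (abs_choice t).imp (fun h ↦ by rwa [h] at ht) (fun h ↦ by rwa [h] at ht)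
    _ ≤ muK1 κ A + muK1 κ (Neg.neg ⁻¹' A) := measure_union_le _ _
    _ = 2 * muK1 κ A := by rw [muK1_preimage_neg, two_mul]

theorem muK1_preimage_abs_Iset_five_le (hκ : 0 ≤ κ) (x : ℝ) {r : ℝ} (hr : 0 ≤ r) :
    muK1 κ (abs ⁻¹' Iset x (5 * r)) ≤
      ENNReal.ofReal (4 * 10 ^ (2 * κ + 1)) * muK1 κ (Iset x r) := by
  have hpow : (|x| + 5 * r) ^ (2 * κ) ≤ 10 ^ (2 * κ) * (|x| + r / 2) ^ (2 * κ) := by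
    rw [← Real.mul_rpow (by norm_num) (by positivity)]
    exact Real.rpow_le_rpow (by positivity) (by linarith [abs_nonneg x]) (by linarith)
  calc muK1 κ (abs ⁻¹' Iset x (5 * r)) ≤ 2 * muK1 κ (Iset x (5 * r)) := muK1_preimage_abs_le _
    _ ≤ ENNReal.ofReal 2 * ENNReal.ofReal (2 * (5 * r) * (|x| + 5 * r) ^ (2 * κ)) := by
        rw [ENNReal.ofReal_ofNat]; gcongr; exact muK1_Iset_le hκ x (by positivity)
    _ ≤ ENNReal.ofReal (4 * 10 ^ (2 * κ + 1)) *
          ENNReal.ofReal (r / 2 * (|x| + r / 2) ^ (2 * κ)) := by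
        rw [← ENNReal.ofReal_mul zero_le_two, ← ENNReal.ofReal_mul (by positivity),
          Real.rpow_add_one (by norm_num)]
        refine ENNReal.ofReal_le_ofReal ?_
        nlinarith [mul_le_mul_of_nonneg_left hpow hr]
    _ ≤ ENNReal.ofReal (4 * 10 ^ (2 * κ + 1)) * muK1 κ (Iset x r) := by
        gcongr; exact ofReal_le_muK1_Iset hκ x hr

end OneDimensional

section Rectangles

variable {d : ℕ} {κ : Fin d → ℝ}

theorem muK_univ_pi (κ : Fin d → ℝ) (S : Fin d → Set ℝ) :
    muK d κ (univ.pi S) = ∏ j, muK1 (κ j) (S j) := by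
  rw [muK, withDensity_apply', volume_pi, Measure.restrict_pi_pi]
  simp_rw [ENNReal.ofReal_prod_of_nonneg fun j _ ↦ Real.rpow_nonneg (abs_nonneg _) _]
  rw [lintegral_fin_nat_prod_eq_prod (f := fun j t ↦ ENNReal.ofReal (|t| ^ (2 * κ j)))
    fun j ↦ by fun_prop]
  simp_rw [muK1, withDensity_apply']

def Rsymm (d : ℕ) (x : Fin d → ℝ) (r : ℝ) : Set (Fin d → ℝ) :=
  {y | (fun j ↦ |y j|) ∈ Rset d x r}

theorem Rsymm_eq_pi (x : Fin d → ℝ) (r : ℝ) :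
    Rsymm d x r = univ.pi fun j ↦ abs ⁻¹' Iset (x j) r :=
  rfl

theorem mem_Rsymm {x y : Fin d → ℝ} {r : ℝ} :
    y ∈ Rsymm d x r ↔ ∀ j, |x j| - r ≤ |y j| ∧ |y j| < |x j| + r := by
  simp [Rsymm, Rset, Iset]

theorem mem_Rsymm_self (x : Fin d → ℝ) {r : ℝ} (hr : 0 < r) : x ∈ Rsymm d x r :=
  mem_Rsymm.2 fun _ ↦ ⟨by linarith, by linarith⟩

theorem measurableSet_Rsymm (x : Fin d → ℝ) (r : ℝ) : MeasurableSet (Rsymm d x r) :=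
  .univ_pi fun _ ↦ measurable_abs measurableSet_Ico

theorem Rsymm_subset_of_nonempty_inter {x x' : Fin d → ℝ} {r r' : ℝ} (hr' : r' ≤ 2 * r)
    (hne : (Rsymm d x r ∩ Rsymm d x' r').Nonempty) : Rsymm d x' r' ⊆ Rsymm d x (5 * r) := by
  obtain ⟨z, hz, hz'⟩ := hne
  intro y hy
  rw [mem_Rsymm] at hz hz' hy ⊢
  intro j
  constructor <;> linarith [hz j, hz' j, hy j]

theorem muK_Rsymm_five_le (hκ : ∀ j, 0 ≤ κ j) (x : Fin d → ℝ) {r : ℝ} (hr : 0 ≤ r) :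
    muK d κ (Rsymm d x (5 * r)) ≤
      ENNReal.ofReal (∏ j, 4 * 10 ^ (2 * κ j + 1)) * muK d κ (Rset d x r) := by
  rw [Rsymm_eq_pi, Rset, muK_univ_pi, muK_univ_pi,
    ENNReal.ofReal_prod_of_nonneg fun _ _ ↦ by positivity, ← Finset.prod_mul_distrib]
  exact Finset.prod_le_prod' fun j _ ↦ muK1_preimage_abs_Iset_five_le (hκ j) _ hr

theorem ofReal_le_muK_Rset (hd : 1 ≤ d) (hκ : ∀ j, 0 ≤ κ j) (x : Fin d → ℝ) {r : ℝ}
    (hr : 2 ≤ r) : ENNReal.ofReal (r / 2) ≤ muK d κ (Rset d x r) := by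
  have hcoord : ∀ j, ENNReal.ofReal (r / 2) ≤ muK1 (κ j) (Iset (x j) r) := fun j ↦
    (ENNReal.ofReal_le_ofReal (le_mul_of_one_le_right (by linarith)
      (Real.one_le_rpow (by linarith [abs_nonneg (x j)]) (by linarith [hκ j])))).trans
      (ofReal_le_muK1_Iset (hκ j) _ (by linarith))
  rw [Rset, muK_univ_pi]
  exact (hcoord ⟨0, hd⟩).trans <| Finset.single_le_prod'
    (fun j _ ↦ (ENNReal.one_le_ofReal.2 (by linarith)).trans (hcoord j)) (Finset.mem_univ _)

end Rectangles

/-- Weak type `(1,1)` inequality for the weighted maximal operator `M_κ^R`. -/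
theorem MR_weak_type_one_one
    (d : ℕ) (hd : 1 ≤ d) (κ : Fin d → ℝ) (hκ : ∀ j, 0 ≤ κ j) :
    ∃ C : ℝ, 0 < C ∧ ∀ f : (Fin d → ℝ) → ℝ, Integrable f (muK d κ) →
      ∀ lam : ℝ, 0 < lam →
      muK d κ {x | ENNReal.ofReal lam < MR d κ f x} ≤
        (ENNReal.ofReal C / ENNReal.ofReal lam) *
          ∫⁻ y, ENNReal.ofReal |f y| ∂(muK d κ) := by
  refine ⟨∏ j, 4 * 10 ^ (2 * κ j + 1), Finset.prod_pos fun _ _ ↦ by positivity,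
    fun f hf lam hlam ↦ ?_⟩
  have hlevel : {x | ENNReal.ofReal lam < MR d κ f x} = {x | ∃ r > 0, ENNReal.ofReal lam <
      (muK d κ (Rset d x r))⁻¹ * ∫⁻ y in Rsymm d x r, ENNReal.ofReal |f y| ∂(muK d κ)} := by
    ext x
    simp only [MR, lt_iSup_iff, mem_ofPred_eq, exists_prop, Rsymm]
  have hRset_large : ∀ M ≠ ∞, ∃ R, ∀ x r, R < r → M < muK d κ (Rset d x r) := fun M hM ↦
    ⟨max 2 (2 * M.toReal), fun x r hr ↦
      ((ENNReal.lt_ofReal_iff_toReal_lt hM).2 (by linarith [(max_lt_iff.1 hr).2])).trans_le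
        (ofReal_le_muK_Rset hd hκ x (max_lt_iff.1 hr).1.le)⟩
  rw [hlevel]
  exact measure_setOf_lt_maximal_le (Rsymm d) (fun x r ↦ muK d κ (Rset d x r)) _
    measurableSet_Rsymm (fun x _ ↦ mem_Rsymm_self x) (fun _ _ _ _ ↦ Rsymm_subset_of_nonempty_inter)
    (fun x _ hr ↦ muK_Rsymm_five_le hκ x hr.le) hRset_large hf.abs.lintegral_lt_top.ne
    (ENNReal.ofReal_pos.2 hlam).ne'
end
end

section
/- Let W be a positive, locally μ_κ-integrable function on ℝ^d and let μ̃_κ be the measure with dμ̃_κ = W dμ_κ. There exists a constant C > 0, depending only on κ_1,…,κ_d, such that for every measurable f and every λ > 0, μ̃_κ({x ∈ ℝ^d : M_κ^R f(x) > λ}) ≤ (C/λ) ∫_{ℝ^d} |f(y)| M_κ^R W(y) dμ_κ(y). -/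
noncomputable section
open MeasureTheory Set Real
open scoped ENNReal NNReal

/-!
On each coordinate `μ_κ(I(x,r))` is comparable to `r (|x| + r)^{2κ}`, so the rectangles are
doubling: `μ_κ(R(x,9r)) ≤ C μ_κ(R(x,r))`. The regions `S(x,r) = {y | ỹ ∈ R(x,r)}`
(`RsetAbs d x r`) behave like balls for the pseudo-distance `max_j ||y_j| - |z_j||`, so the
Vitali covering lemma extracts, from the regions on which the average of `|f|` exceeds `λ`, a
disjoint subfamily whose fivefold enlargements cover the level set. For `y ∈ S(b,r)` we have
`S(b,5r) ⊆ S(y,6r)` and `R(y,6r) ⊆ R(b,9r)`, hence `μ̃_κ(S(b,5r)) ≤ C μ_κ(R(b,r)) M_κ^R W(y)`.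
Integrating `|f|` over `S(b,r)` against this bound and using `λ μ_κ(R(b,r)) < ∫_{S(b,r)} |f| dμ_κ`
bounds each enlarged region, and the selected regions are disjoint, so the bounds add up.
-/

lemma nonneg_of_mem_Iset {u x r : ℝ} (h : u ∈ Iset x r) : 0 ≤ u :=
  (le_max_left _ _).trans h.1

lemma abs_sub_abs_le_of_mem_Iset {u x r : ℝ} (h : u ∈ Iset x r) : abs (u - |x|) ≤ r :=
  abs_sub_le_iff.mpr ⟨by linarith [h.2], by linarith [(le_max_right 0 (|x| - r)).trans h.1]⟩

lemma abs_mem_Iset_self (x : ℝ) {r : ℝ} (hr : 0 < r) : |x| ∈ Iset x r :=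
  ⟨max_le (abs_nonneg x) (by linarith), by linarith⟩

lemma Iset_subset_Iset {x y r s : ℝ} (h : abs (|x| - |y|) + r ≤ s) : Iset x r ⊆ Iset y s := by
  obtain ⟨h₁, h₂⟩ := abs_le.mp (le_sub_iff_add_le.mpr h)
  exact Ico_subset_Ico (max_le_max le_rfl (by linarith)) (by linarith)

lemma volume_Iset_le (x r : ℝ) : volume (Iset x r) ≤ ENNReal.ofReal (2 * r) := by
  rw [Iset, Real.volume_Ico]
  exact ENNReal.ofReal_le_ofReal (by linarith [le_max_right 0 (|x| - r)])

lemma Ico_subset_Iset (x : ℝ) {r : ℝ} (hr : 0 ≤ r) :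
    Ico (max (r / 2) |x|) (max (r / 2) |x| + r / 2) ⊆ Iset x r := by
  refine Ico_subset_Ico (max_le (by positivity) ?_) ?_
  · exact (by linarith : |x| - r ≤ |x|).trans (le_max_right _ _)
  · rcases max_cases (r / 2) |x| with ⟨h, -⟩ | ⟨h, -⟩ <;> rw [h] <;> linarith [abs_nonneg x]

lemma add_nine_mul_rpow_mul_le {k a r : ℝ} (hk : 0 ≤ k) (ha : 0 ≤ a) (hr : 0 ≤ r) :
    (a + 9 * r) ^ (2 * k) * (2 * (9 * r)) ≤
      36 ^ (2 * k + 1) * (((a + r) / 4) ^ (2 * k) * (r / 2)) := by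
  have h : (a + 9 * r) ^ (2 * k) ≤ 36 ^ (2 * k) * ((a + r) / 4) ^ (2 * k) := by
    rw [← Real.mul_rpow (by norm_num) (by positivity)]
    exact Real.rpow_le_rpow (by positivity) (by linarith) (by linarith)
  rw [Real.rpow_add_one (by norm_num : (36 : ℝ) ≠ 0)]
  calc (a + 9 * r) ^ (2 * k) * (2 * (9 * r))
      ≤ 36 ^ (2 * k) * ((a + r) / 4) ^ (2 * k) * (2 * (9 * r)) := by gcongr
    _ = _ := by ring

section Rectangles

variable {d : ℕ} {κ : Fin d → ℝ}

instance : SFinite (muK d κ) := by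
  unfold muK
  infer_instance

lemma muK_univ_pi_le {s : Fin d → Set ℝ} (hs : ∀ j, MeasurableSet (s j)) {M : Fin d → ℝ}
    (hM : ∀ j, ∀ t ∈ s j, |t| ^ (2 * κ j) ≤ M j) :
    muK d κ (univ.pi s) ≤ ∏ j, ENNReal.ofReal (M j) * volume (s j) := by
  rw [muK, withDensity_apply _ (MeasurableSet.univ_pi hs)]
  calc ∫⁻ x in univ.pi s, ENNReal.ofReal (∏ j, |x j| ^ (2 * κ j))
      ≤ ∫⁻ _ in univ.pi s, ∏ j, ENNReal.ofReal (M j) := by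
        refine setLIntegral_mono' (MeasurableSet.univ_pi hs) fun x hx => ?_
        rw [ENNReal.ofReal_prod_of_nonneg fun j _ => by positivity]
        exact Finset.prod_le_prod' fun j _ => ENNReal.ofReal_le_ofReal (hM j _ (hx j trivial))
    _ = ∏ j, ENNReal.ofReal (M j) * volume (s j) := by
        rw [setLIntegral_const, volume_pi_pi, Finset.prod_mul_distrib]

lemma le_muK_univ_pi {s : Fin d → Set ℝ} (hs : ∀ j, MeasurableSet (s j)) {m : Fin d → ℝ}
    (hm : ∀ j, ∀ t ∈ s j, m j ≤ |t| ^ (2 * κ j)) :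
    ∏ j, ENNReal.ofReal (m j) * volume (s j) ≤ muK d κ (univ.pi s) := by
  rw [muK, withDensity_apply _ (MeasurableSet.univ_pi hs)]
  calc ∏ j, ENNReal.ofReal (m j) * volume (s j)
      = ∫⁻ _ in univ.pi s, ∏ j, ENNReal.ofReal (m j) := by
        rw [setLIntegral_const, volume_pi_pi, Finset.prod_mul_distrib]
    _ ≤ ∫⁻ x in univ.pi s, ENNReal.ofReal (∏ j, |x j| ^ (2 * κ j)) := by
        refine setLIntegral_mono' (MeasurableSet.univ_pi hs) fun x hx => ?_
        rw [ENNReal.ofReal_prod_of_nonneg fun j _ => by positivity]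
        exact Finset.prod_le_prod' fun j _ => ENNReal.ofReal_le_ofReal (hm j _ (hx j trivial))

def rectDoublingConst (d : ℕ) (κ : Fin d → ℝ) : ℝ := ∏ j, (36 : ℝ) ^ (2 * κ j + 1)

lemma rectDoublingConst_pos : 0 < rectDoublingConst d κ :=
  Finset.prod_pos fun _ _ => by positivity

variable (hκ : ∀ j, 0 ≤ κ j)
include hκ

lemma muK_Rset_le (x : Fin d → ℝ) (r : ℝ) :
    muK d κ (Rset d x r) ≤
      ∏ j, ENNReal.ofReal ((|x j| + r) ^ (2 * κ j)) * ENNReal.ofReal (2 * r) := by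
  refine (muK_univ_pi_le (fun _ => measurableSet_Ico) fun j t ht => ?_).trans
    (Finset.prod_le_prod' fun j _ => by gcongr; exact volume_Iset_le _ _)
  have ht₀ := nonneg_of_mem_Iset ht
  rw [abs_of_nonneg ht₀]
  exact Real.rpow_le_rpow ht₀ ht.2.le (by linarith [hκ j])

lemma le_muK_Rset (x : Fin d → ℝ) {r : ℝ} (hr : 0 ≤ r) :
    ∏ j, ENNReal.ofReal (((|x j| + r) / 4) ^ (2 * κ j)) * ENNReal.ofReal (r / 2) ≤
      muK d κ (Rset d x r) := by
  calc _ = ∏ j, ENNReal.ofReal (((|x j| + r) / 4) ^ (2 * κ j)) *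
        volume (Ico (max (r / 2) |x j|) (max (r / 2) |x j| + r / 2)) := by
        simp only [Real.volume_Ico, add_sub_cancel_left]
    _ ≤ muK d κ (univ.pi fun j => Ico (max (r / 2) |x j|) (max (r / 2) |x j| + r / 2)) := by
        refine le_muK_univ_pi (fun _ => measurableSet_Ico) fun j t ht => ?_
        have ht₀ : (|x j| + r) / 4 ≤ t := by
          linarith [ht.1, le_max_left (r / 2) |x j|, le_max_right (r / 2) |x j|]
        rw [abs_of_nonneg (a := t) (by linarith [abs_nonneg (x j)])]
        exact Real.rpow_le_rpow (by positivity) ht₀ (by linarith [hκ j])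
    _ ≤ muK d κ (Rset d x r) := measure_mono (pi_mono fun j _ => Ico_subset_Iset (x j) hr)

lemma muK_Rset_pos (x : Fin d → ℝ) {r : ℝ} (hr : 0 < r) : 0 < muK d κ (Rset d x r) := by
  refine lt_of_lt_of_le ?_ (le_muK_Rset hκ x hr.le)
  refine CanonicallyOrderedAdd.prod_pos.mpr fun j _ => ENNReal.mul_pos ?_ ?_ <;>
    refine (ENNReal.ofReal_pos.mpr ?_).ne'
  · exact Real.rpow_pos_of_pos (by positivity) _
  · positivity

lemma muK_Rset_ne_top (x : Fin d → ℝ) (r : ℝ) : muK d κ (Rset d x r) ≠ ∞ :=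
  ne_top_of_le_ne_top (ENNReal.prod_ne_top fun _ _ => ENNReal.mul_ne_top ENNReal.ofReal_ne_top
    ENNReal.ofReal_ne_top) (muK_Rset_le hκ x r)

lemma muK_Rset_nine_mul_le (x : Fin d → ℝ) {r : ℝ} (hr : 0 ≤ r) :
    muK d κ (Rset d x (9 * r)) ≤ ENNReal.ofReal (rectDoublingConst d κ) * muK d κ (Rset d x r) :=
  calc muK d κ (Rset d x (9 * r))
      ≤ ∏ j, ENNReal.ofReal ((|x j| + 9 * r) ^ (2 * κ j)) * ENNReal.ofReal (2 * (9 * r)) :=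
        muK_Rset_le hκ x _
    _ ≤ ∏ j, ENNReal.ofReal (36 ^ (2 * κ j + 1)) *
          (ENNReal.ofReal (((|x j| + r) / 4) ^ (2 * κ j)) * ENNReal.ofReal (r / 2)) := by
        refine Finset.prod_le_prod' fun j _ => ?_
        rw [← ENNReal.ofReal_mul (by positivity), ← ENNReal.ofReal_mul (by positivity),
          ← ENNReal.ofReal_mul (by positivity)]
        exact ENNReal.ofReal_le_ofReal (add_nine_mul_rpow_mul_le (hκ j) (abs_nonneg _) hr)
    _ ≤ ENNReal.ofReal (rectDoublingConst d κ) * muK d κ (Rset d x r) := by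
        rw [Finset.prod_mul_distrib, rectDoublingConst,
          ENNReal.ofReal_prod_of_nonneg fun _ _ => by positivity]
        gcongr
        exact le_muK_Rset hκ x hr

end Rectangles

section RsetAbs

variable {d : ℕ}

def RsetAbs (d : ℕ) (x : Fin d → ℝ) (r : ℝ) : Set (Fin d → ℝ) :=
  {y | (fun j => |y j|) ∈ Rset d x r}

lemma mem_RsetAbs {x y : Fin d → ℝ} {r : ℝ} : y ∈ RsetAbs d x r ↔ ∀ j, |y j| ∈ Iset (x j) r := by
  simp [RsetAbs, Rset]

lemma measurableSet_RsetAbs {x : Fin d → ℝ} {r : ℝ} : MeasurableSet (RsetAbs d x r) :=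
  (MeasurableSet.univ_pi fun _ => measurableSet_Ico).preimage
    (measurable_pi_lambda _ fun j => (measurable_pi_apply j).abs)

lemma self_mem_RsetAbs (x : Fin d → ℝ) {r : ℝ} (hr : 0 < r) : x ∈ RsetAbs d x r :=
  mem_RsetAbs.mpr fun j => abs_mem_Iset_self (x j) hr

lemma Rset_subset_RsetAbs {x : Fin d → ℝ} {r : ℝ} : Rset d x r ⊆ RsetAbs d x r := fun y hy =>
  mem_RsetAbs.mpr fun j => by
    rw [abs_of_nonneg (nonneg_of_mem_Iset (hy j trivial))]
    exact hy j trivial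

lemma abs_sub_abs_le_of_mem_RsetAbs {x y : Fin d → ℝ} {r : ℝ} (hy : y ∈ RsetAbs d x r) (j : Fin d) :
    abs (|y j| - |x j|) ≤ r :=
  abs_sub_abs_le_of_mem_Iset (mem_RsetAbs.mp hy j)

lemma Rset_subset_Rset {x y : Fin d → ℝ} {r s : ℝ} (h : ∀ j, abs (|x j| - |y j|) + r ≤ s) :
    Rset d x r ⊆ Rset d y s :=
  pi_mono fun j _ => Iset_subset_Iset (h j)

lemma RsetAbs_subset_RsetAbs {x y : Fin d → ℝ} {r s : ℝ} (h : ∀ j, abs (|x j| - |y j|) + r ≤ s) :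
    RsetAbs d x r ⊆ RsetAbs d y s := fun _ hz =>
  mem_RsetAbs.mpr fun j => Iset_subset_Iset (h j) (mem_RsetAbs.mp hz j)

lemma RsetAbs_subset_of_nonempty_inter {a b : Fin d → ℝ} {r s : ℝ}
    (h : (RsetAbs d a r ∩ RsetAbs d b s).Nonempty) (hrs : r ≤ 2 * s) :
    RsetAbs d a r ⊆ RsetAbs d b (5 * s) := by
  obtain ⟨z, hza, hzb⟩ := h
  refine RsetAbs_subset_RsetAbs fun j => ?_
  have := abs_sub_abs_le_of_mem_RsetAbs hza j
  have := abs_sub_abs_le_of_mem_RsetAbs hzb j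
  have := abs_sub_le (|a j|) (|z j|) (|b j|)
  have := abs_sub_comm (|a j|) (|z j|)
  linarith

end RsetAbs

section Maximal

variable {d : ℕ} {κ : Fin d → ℝ} (hκ : ∀ j, 0 ≤ κ j)
include hκ

lemma setLIntegral_RsetAbs_le_mul_MR (f : (Fin d → ℝ) → ℝ) (x : Fin d → ℝ) {r : ℝ} (hr : 0 < r) :
    ∫⁻ y in RsetAbs d x r, ENNReal.ofReal |f y| ∂muK d κ ≤ muK d κ (Rset d x r) * MR d κ f x := by
  rw [← ENNReal.mul_inv_cancel_left (b := ∫⁻ y in RsetAbs d x r, ENNReal.ofReal |f y| ∂muK d κ)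
    (muK_Rset_pos hκ x hr).ne' (muK_Rset_ne_top hκ x r)]
  gcongr
  exact le_iSup₂ (f := fun r (_ : 0 < r) => (muK d κ (Rset d x r))⁻¹ *
    ∫⁻ y in RsetAbs d x r, ENNReal.ofReal |f y| ∂muK d κ) r hr

lemma exists_mul_lt_setLIntegral_of_lt_MR {f : (Fin d → ℝ) → ℝ} {x : Fin d → ℝ} {c : ℝ≥0∞}
    (h : c < MR d κ f x) :
    ∃ r, 0 < r ∧
      c * muK d κ (Rset d x r) < ∫⁻ y in RsetAbs d x r, ENNReal.ofReal |f y| ∂muK d κ := by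
  obtain ⟨r, hc⟩ := lt_iSup_iff.mp h
  obtain ⟨hr, hc⟩ := lt_iSup_iff.mp hc
  rw [← ENNReal.div_eq_inv_mul, ENNReal.lt_div_iff_mul_lt (Or.inl (muK_Rset_pos hκ x hr).ne')
    (Or.inl (muK_Rset_ne_top hκ x r))] at hc
  exact ⟨r, hr, hc⟩

end Maximal

theorem Set.PairwiseDisjoint.countable_of_measure_pos {α ι : Type*} [MeasurableSpace α]
    {μ : Measure α} [SFinite μ] {u : Set ι} {B : ι → Set α} (hB : ∀ i ∈ u, MeasurableSet (B i))
    (hu : u.PairwiseDisjoint B) (hpos : ∀ i ∈ u, 0 < μ (B i)) : u.Countable := by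
  have h := Measure.countable_meas_pos_of_disjoint_iUnion (μ := μ) (As := fun i : u => B i)
    (fun i => hB i i.2) fun i j hij => hu i.2 j.2 (Subtype.coe_injective.ne hij)
  rw [show {i : u | 0 < μ (B i)} = univ from eq_univ_of_forall fun i => hpos i i.2,
    countable_univ_iff] at h
  exact countable_coe_iff.mp h

section WeakType

variable {d : ℕ} {κ : Fin d → ℝ} (hκ : ∀ j, 0 ≤ κ j) {W : (Fin d → ℝ) → ℝ}
include hκ

lemma withDensity_RsetAbs_five_mul_le {b y : Fin d → ℝ} {r : ℝ} (hr : 0 < r)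
    (hy : y ∈ RsetAbs d b r) :
    (muK d κ).withDensity (fun x => ENNReal.ofReal (W x)) (RsetAbs d b (5 * r)) ≤
      ENNReal.ofReal (rectDoublingConst d κ) * muK d κ (Rset d b r) * MR d κ W y := by
  have hyb := abs_sub_abs_le_of_mem_RsetAbs hy
  calc (muK d κ).withDensity (fun x => ENNReal.ofReal (W x)) (RsetAbs d b (5 * r))
      = ∫⁻ z in RsetAbs d b (5 * r), ENNReal.ofReal (W z) ∂muK d κ :=
        withDensity_apply _ measurableSet_RsetAbs
    _ ≤ ∫⁻ z in RsetAbs d y (6 * r), ENNReal.ofReal |W z| ∂muK d κ := by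
        refine lintegral_mono' (Measure.restrict_mono (RsetAbs_subset_RsetAbs fun j => ?_) le_rfl)
          fun z => ENNReal.ofReal_le_ofReal (le_abs_self _)
        linarith [hyb j, abs_sub_comm (|b j|) (|y j|)]
    _ ≤ muK d κ (Rset d y (6 * r)) * MR d κ W y :=
        setLIntegral_RsetAbs_le_mul_MR hκ W y (by positivity)
    _ ≤ muK d κ (Rset d b (9 * r)) * MR d κ W y := by
        gcongr
        exact Rset_subset_Rset fun j => by linarith [hyb j]
    _ ≤ ENNReal.ofReal (rectDoublingConst d κ) * muK d κ (Rset d b r) * MR d κ W y := by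
        gcongr
        exact muK_Rset_nine_mul_le hκ b hr.le

lemma withDensity_RsetAbs_five_mul_le_of_mul_lt {f : (Fin d → ℝ) → ℝ} (hf : Measurable f)
    {c : ℝ≥0∞} (hc₀ : c ≠ 0) (hc : c ≠ ∞) {b : Fin d → ℝ} {r : ℝ} (hr : 0 < r)
    (hb : c * muK d κ (Rset d b r) < ∫⁻ y in RsetAbs d b r, ENNReal.ofReal |f y| ∂muK d κ) :
    (muK d κ).withDensity (fun x => ENNReal.ofReal (W x)) (RsetAbs d b (5 * r)) ≤
      ENNReal.ofReal (rectDoublingConst d κ) / c *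
        ∫⁻ y in RsetAbs d b r, ENNReal.ofReal |f y| * MR d κ W y ∂muK d κ := by
  set m := (muK d κ).withDensity (fun x => ENNReal.ofReal (W x)) (RsetAbs d b (5 * r))
  set a := muK d κ (Rset d b r)
  set C := ENNReal.ofReal (rectDoublingConst d κ)
  set I := ∫⁻ y in RsetAbs d b r, ENNReal.ofReal |f y| * MR d κ W y ∂muK d κ
  have hmul : m * c * a ≤ C * I * a :=
    calc m * c * a = m * (c * a) := mul_assoc _ _ _
      _ ≤ m * ∫⁻ y in RsetAbs d b r, ENNReal.ofReal |f y| ∂muK d κ := by gcongr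
      _ = ∫⁻ y in RsetAbs d b r, m * ENNReal.ofReal |f y| ∂muK d κ :=
        (lintegral_const_mul m (ENNReal.measurable_ofReal.comp hf.abs)).symm
      _ ≤ ∫⁻ y in RsetAbs d b r, C * a * (ENNReal.ofReal |f y| * MR d κ W y) ∂muK d κ := by
        refine setLIntegral_mono' measurableSet_RsetAbs fun y hy => ?_
        calc m * ENNReal.ofReal |f y| ≤ C * a * MR d κ W y * ENNReal.ofReal |f y| := by
              gcongr
              exact withDensity_RsetAbs_five_mul_le hκ hr hy
          _ = C * a * (ENNReal.ofReal |f y| * MR d κ W y) := by ring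
      _ = C * I * a := by
        rw [lintegral_const_mul' _ _ (ENNReal.mul_ne_top ENNReal.ofReal_ne_top
          (muK_Rset_ne_top hκ b r))]
        ring
  rw [ENNReal.mul_le_mul_iff_left (muK_Rset_pos hκ b hr).ne' (muK_Rset_ne_top hκ b r),
    ← ENNReal.le_div_iff_mul_le (Or.inl hc₀) (Or.inl hc)] at hmul
  exact hmul.trans_eq ENNReal.mul_div_right_comm

lemma withDensity_le_of_forall_mul_lt_setLIntegral {f : (Fin d → ℝ) → ℝ} (hf : Measurable f)
    {c : ℝ≥0∞} (hc₀ : c ≠ 0) (hc : c ≠ ∞) {G : Set (Fin d → ℝ)} {ρ : (Fin d → ℝ) → ℝ} {R : ℝ}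
    (hρ : ∀ x ∈ G, 0 < ρ x ∧ ρ x ≤ R ∧
      c * muK d κ (Rset d x (ρ x)) < ∫⁻ y in RsetAbs d x (ρ x), ENNReal.ofReal |f y| ∂muK d κ) :
    (muK d κ).withDensity (fun x => ENNReal.ofReal (W x)) G ≤
      ENNReal.ofReal (rectDoublingConst d κ) / c *
        ∫⁻ y, ENNReal.ofReal |f y| * MR d κ W y ∂muK d κ := by
  obtain ⟨u, huG, hdisj, hcov⟩ := Vitali.exists_disjoint_subfamily_covering_enlargement
    (fun x => RsetAbs d x (ρ x)) G ρ 2 one_lt_two (fun x hx => (hρ x hx).1.le) R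
    (fun x hx => (hρ x hx).2.1) fun x hx => ⟨x, self_mem_RsetAbs x (hρ x hx).1⟩
  have hu : u.Countable := hdisj.countable_of_measure_pos (μ := muK d κ)
    (fun _ _ => measurableSet_RsetAbs) fun b hb =>
      (muK_Rset_pos hκ b (hρ b (huG hb)).1).trans_le (measure_mono Rset_subset_RsetAbs)
  have hGcov : G ⊆ ⋃ b ∈ u, RsetAbs d b (5 * ρ b) := fun x hx => by
    obtain ⟨b, hb, hxb, hρb⟩ := hcov x hx
    exact mem_biUnion hb (RsetAbs_subset_of_nonempty_inter hxb hρb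
      (self_mem_RsetAbs x (hρ x hx).1))
  calc (muK d κ).withDensity (fun x => ENNReal.ofReal (W x)) G
      ≤ ∑' b : u, (muK d κ).withDensity (fun x => ENNReal.ofReal (W x)) (RsetAbs d b (5 * ρ b)) :=
        (measure_mono hGcov).trans (measure_biUnion_le _ hu _)
    _ ≤ ∑' b : u, ENNReal.ofReal (rectDoublingConst d κ) / c *
          ∫⁻ y in RsetAbs d b (ρ b), ENNReal.ofReal |f y| * MR d κ W y ∂muK d κ :=
        ENNReal.tsum_le_tsum fun b => withDensity_RsetAbs_five_mul_le_of_mul_lt hκ hf hc₀ hc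
          (hρ b (huG b.2)).1 (hρ b (huG b.2)).2.2
    _ = ENNReal.ofReal (rectDoublingConst d κ) / c *
          ∫⁻ y in ⋃ b ∈ u, RsetAbs d b (ρ b), ENNReal.ofReal |f y| * MR d κ W y ∂muK d κ := by
        rw [ENNReal.tsum_mul_left,
          lintegral_biUnion hu (fun _ _ => measurableSet_RsetAbs) hdisj]
    _ ≤ _ := by
        gcongr
        exact Measure.restrict_le_self

end WeakType

theorem MR_weighted_weak_type_general
    (d : ℕ) (κ : Fin d → ℝ) (hκ : ∀ j, 0 ≤ κ j) :
    ∃ C : ℝ, 0 < C ∧ ∀ W : (Fin d → ℝ) → ℝ, (∀ x, 0 < W x) →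
      LocallyIntegrable W (muK d κ) →
      ∀ f : (Fin d → ℝ) → ℝ, Measurable f → ∀ lam : ℝ, 0 < lam →
      (muK d κ).withDensity (fun x => ENNReal.ofReal (W x))
          {x | ENNReal.ofReal lam < MR d κ f x} ≤
        (ENNReal.ofReal C / ENNReal.ofReal lam) *
          ∫⁻ y, ENNReal.ofReal |f y| * MR d κ W y ∂(muK d κ) := by
  refine ⟨rectDoublingConst d κ, rectDoublingConst_pos, fun W _ _ f hf lam hlam => ?_⟩
  -- The Vitali covering lemma needs bounded radii, so exhaust the level set by radii `≤ N`.
  let G : ℕ → Set (Fin d → ℝ) := fun N => {x | ∃ r : ℝ, 0 < r ∧ r ≤ N ∧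
    ENNReal.ofReal lam * muK d κ (Rset d x r) <
      ∫⁻ y in RsetAbs d x r, ENNReal.ofReal |f y| ∂muK d κ}
  have hG : Monotone G := fun N N' hN x ⟨r, hr, hrN, hx⟩ =>
    ⟨r, hr, hrN.trans (Nat.cast_le.mpr hN), hx⟩
  have hlevel : {x | ENNReal.ofReal lam < MR d κ f x} ⊆ ⋃ N, G N := fun x hx => by
    obtain ⟨r, hr, hxr⟩ := exists_mul_lt_setLIntegral_of_lt_MR hκ hx
    obtain ⟨N, hN⟩ := exists_nat_ge r
    exact mem_iUnion.mpr ⟨N, r, hr, hN, hxr⟩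
  refine (measure_mono hlevel).trans ?_
  rw [hG.measure_iUnion]
  refine iSup_le fun N => ?_
  choose! ρ hρ using fun x (hx : x ∈ G N) => hx
  exact withDensity_le_of_forall_mul_lt_setLIntegral hκ hf (ENNReal.ofReal_pos.mpr hlam).ne'
    ENNReal.ofReal_ne_top hρ

/-- Weighted weak type inequality for `M_κ^R`. -/
theorem MR_weighted_weak_type
    (d : ℕ) (hd : 1 ≤ d) (κ : Fin d → ℝ) (hκ : ∀ j, 0 ≤ κ j) :
    ∃ C : ℝ, 0 < C ∧ ∀ W : (Fin d → ℝ) → ℝ, (∀ x, 0 < W x) →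
      LocallyIntegrable W (muK d κ) →
      ∀ f : (Fin d → ℝ) → ℝ, Measurable f → ∀ lam : ℝ, 0 < lam →
      (muK d κ).withDensity (fun x => ENNReal.ofReal (W x))
          {x | ENNReal.ofReal lam < MR d κ f x} ≤
        (ENNReal.ofReal C / ENNReal.ofReal lam) *
          ∫⁻ y, ENNReal.ofReal |f y| * MR d κ W y ∂(muK d κ) :=
  MR_weighted_weak_type_general d κ hκ
end
end
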